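/- arXiv:2212.10235 — 11 statements merged into one kernel-verified Lean document; each statement's English description precedes it below -/
import Mathlib

section
/- Let T be a (p,q)-banded matrix with nonvanishing extreme diagonals and let A^{(a)}_n (a ∈ {1,…,p}) be the left recursion polynomials for any choice of the constants ν^{(a)}_j. Then for every a ∈ {1,…,p} and every integer n ≥ a−1, the degree of A^{(a)}_n is at most ⌈(n+2−a)/p⌉ − 1. -/
/-- Degree bound for the left recursion polynomials of a `(p,q)`-banded matrix with
nonvanishing extreme diagonals: for `a ∈ {1,…,p}` and `n ≥ a−1`,
`deg A^{(a)}_n ≤ ⌈(n+2−a)/p⌉ − 1`. -/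
theorem left_recursion_polynomials_degree
    (p q : ℕ) (hp : 1 ≤ p) (hq : 1 ≤ q)
    (T : ℕ → ℕ → ℝ)
    (hband : ∀ i j, (j + p < i ∨ i + q < j) → T i j = 0)
    (hext : ∀ n, T (n + p) n ≠ 0 ∧ T n (n + q) ≠ 0)
    (ν : ℕ → ℕ → ℝ) (A : ℕ → ℕ → Polynomial ℝ)
    (hA0 : ∀ a, 1 ≤ a → a ≤ p → ∀ n, n < a - 1 → A a n = 0)
    (hA1 : ∀ a, 1 ≤ a → a ≤ p → A a (a - 1) = 1)
    (hAconst : ∀ a, 1 ≤ a → a ≤ p → ∀ j, a ≤ j → j ≤ p - 1 → A a j = Polynomial.C (ν a j))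
    (hArec : ∀ a, 1 ≤ a → a ≤ p → ∀ n,
      ∑ m ∈ Finset.Icc (n - q) (n + p), A a m * Polynomial.C (T m n)
        = Polynomial.X * A a n) :
    ∀ a, 1 ≤ a → a ≤ p → ∀ n : ℕ, a - 1 ≤ n →
      ((A a n).natDegree : ℤ) ≤ ⌈((n + 2 - a : ℤ) : ℚ) / (p : ℚ)⌉ - 1 := by
  intro a ha1 hap
  obtain ⟨p', rfl⟩ : ∃ p', p = p' + 1 := ⟨p - 1, by omega⟩
  -- Key bound in ℕ with natural division.
  have key : ∀ n : ℕ, (A a n).natDegree ≤ (n + 1 - a) / (p' + 1) := by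
    intro n
    induction n using Nat.strong_induction_on with
    | _ n IH =>
      by_cases hn : n < p' + 1
      · -- base cases: A a n is constant (or 0 or 1)
        rcases lt_trichotomy n (a - 1) with h | h | h
        · rw [hA0 a ha1 hap n h]; simp
        · rw [h, hA1 a ha1 hap]; simp
        · rw [hAconst a ha1 hap n (by omega) (by omega)]; simp
      · -- inductive step: n = m + (p'+1)
        obtain ⟨m, rfl⟩ : ∃ m, n = m + (p' + 1) := ⟨n - (p' + 1), by omega⟩
        have hrec := hArec a ha1 hap m
        rw [show m + (p' + 1) = m + p' + 1 by omega] at hrec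
        rw [Finset.sum_Icc_succ_top (by omega : m - q ≤ m + p' + 1)] at hrec
        have hT : T (m + (p' + 1)) m ≠ 0 := (hext m).1
        have heq : A a (m + (p' + 1)) * Polynomial.C (T (m + (p' + 1)) m)
            = Polynomial.X * A a m
              - ∑ k ∈ Finset.Icc (m - q) (m + p'), A a k * Polynomial.C (T k m) := by
          have : m + (p' + 1) = m + p' + 1 := by omega
          rw [this] at hT ⊢
          linear_combination hrec
        have hdeg : (A a (m + (p' + 1))).natDegree
            = (A a (m + (p' + 1)) * Polynomial.C (T (m + (p' + 1)) m)).natDegree :=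
          (Polynomial.natDegree_mul_C hT).symm
        rw [hdeg, heq]
        refine le_trans (Polynomial.natDegree_sub_le _ _) (max_le ?_ ?_)
        · -- degree of X * A a m
          by_cases hm : m + 1 < a
          · rw [hA0 a ha1 hap m (by omega), mul_zero]
            simp
          · refine le_trans (Polynomial.natDegree_mul_le) ?_
            rw [Polynomial.natDegree_X]
            have h1 := IH m (by omega)
            have h2 : (m + (p' + 1) + 1 - a) / (p' + 1) = (m + 1 - a) / (p' + 1) + 1 := by
              have : m + (p' + 1) + 1 - a = (m + 1 - a) + (p' + 1) := by omega
              rw [this, Nat.add_div_right _ (by omega)]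
            omega
        · refine Polynomial.natDegree_sum_le_of_forall_le _ _ ?_
          intro k hk
          simp only [Finset.mem_Icc] at hk
          refine le_trans (Polynomial.natDegree_mul_C_le _ _) ?_
          refine le_trans (IH k (by omega)) ?_
          exact Nat.div_le_div_right (by omega)
  -- conversion to the ceiling formulation
  intro n hn
  have hkey := key n
  have hceil : ⌈((n + 2 - a : ℤ) : ℚ) / ((p' + 1 : ℕ) : ℚ)⌉
      = ((n + 1 - a : ℕ) / (p' + 1) : ℕ) + 1 := by
    set k : ℕ := n + 1 - a with hk
    set D : ℕ := k / (p' + 1) with hD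
    have hkn : (k : ℤ) = n + 1 - a := by omega
    have hdm : (p' + 1) * D + k % (p' + 1) = k := Nat.div_add_mod k (p' + 1)
    have hmod : k % (p' + 1) < p' + 1 := Nat.mod_lt k (by omega)
    have hle : (p' + 1) * D ≤ k := Nat.le.intro hdm
    have hlt : k < (p' + 1) * D + (p' + 1) :=
      hdm ▸ Nat.add_lt_add_left hmod _
    have hppos : (0 : ℚ) < ((p' + 1 : ℕ) : ℚ) := by positivity
    have hleQ : ((p' : ℚ) + 1) * D ≤ (k : ℚ) := by exact_mod_cast hle
    have hltQ : (k : ℚ) + 1 ≤ ((p' : ℚ) + 1) * D + ((p' : ℚ) + 1) := by exact_mod_cast hlt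
    have hkq : (k : ℚ) = (n : ℚ) + 1 - a := by
      have h2 : ((k : ℤ) : ℚ) = (((n : ℤ) + 1 - a : ℤ) : ℚ) := by rw [hkn]
      push_cast at h2
      exact h2
    rw [Int.ceil_eq_iff]
    constructor
    · rw [lt_div_iff₀ hppos]
      push_cast
      have hr : ((D : ℚ) + 1 - 1) * ((p' : ℚ) + 1) = ((p' : ℚ) + 1) * D := by ring
      linarith
    · rw [div_le_iff₀ hppos]
      push_cast
      have hr : ((D : ℚ) + 1) * ((p' : ℚ) + 1) = ((p' : ℚ) + 1) * D + ((p' : ℚ) + 1) := by ring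
      linarith
  rw [hceil]
  omega
end

section
/- Let T be a (p,q)-banded matrix with nonvanishing extreme diagonals and let B^{(b)}_n (b ∈ {1,…,q}) be the right recursion polynomials for any choice of the constants ξ^{(b)}_j. Then for every N ∈ ℕ, the characteristic polynomial satisfies P_N = β_N · det B_N as an identity in ℝ[x], where B_N is the q×q matrix of polynomials with (i,b) entry B^{(b)}_{N+i} (i ∈ {0,…,q−1}, b ∈ {1,…,q}). -/
/-!
The first `N` rows of `X • 1 - T`, cut off after column `N + q - 1`, form an `N × (N + q)`
matrix `M` annihilating the `(N + q) × q` matrix `W` with columns `(B^{(b)}_k)_{k < N + q}`: this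
is the recursion together with the band condition. Whenever `M * W = 0`, complementary minors
agree up to sign: `det M[·, 0..N) * det W[0..q), ·] = ± det M[·, q..N+q) * det W[N..N+q), ·]`.
Here the first minor of `M` is `P_N`, `W[0..q), ·]` is unit lower triangular, `M[·, q..N+q)` is
lower triangular with diagonal `-T k (k + q)`, and `W[N..N+q), ·]` is the matrix `B_N`.
-/

open Equiv Polynomial Matrix Finset

theorem coe_finRotate_pow_apply {n : ℕ} (k : ℕ) (i : Fin n) :
    ((finRotate n ^ k) i : ℕ) = (i + k) % n := by
  obtain ⟨m, rfl⟩ : ∃ m, n = m + 1 := ⟨n - 1, by have := i.pos; omega⟩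
  induction k with
  | zero => simp [Nat.mod_eq_of_lt i.isLt]
  | succ k ih =>
    rw [pow_succ', Perm.mul_apply, finRotate_apply, Fin.val_add, ih, Fin.val_one',
      Nat.mod_add_mod, Nat.add_mod_mod, add_assoc]

theorem sign_finSumFinEquiv_trans_symm (m n : ℕ) :
    Perm.sign (finSumFinEquiv.trans
      ((sumComm (Fin m) (Fin n)).trans (finSumFinEquiv.trans (finCongr (add_comm n m)))).symm) =
      (-1) ^ (m * n) := by
  set e := (sumComm (Fin m) (Fin n)).trans (finSumFinEquiv.trans (finCongr (add_comm n m)))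
  rw [Perm.sign_eq_sign_of_equiv _ (finRotate (m + n) ^ m) e ?rotate, map_pow,
    sign_finRotate, ← pow_mul]
  case rotate =>
    rintro (a | b) <;> ext <;> simp [e, coe_finRotate_pow_apply]
    · rw [add_assoc, Nat.add_comm n m, Nat.add_mod_right, Nat.mod_eq_of_lt (by omega)]
    · rw [Nat.mod_eq_of_lt (by omega), Nat.add_comm]
  obtain _ | m := m
  · simp
  · rw [show (m + 1 + n - 1) * (m + 1) = m * (m + 1) + (m + 1) * n by
      rw [show m + 1 + n - 1 = m + n by omega]; ring, pow_add,
      (Nat.even_mul_succ_self m).neg_one_pow, one_mul]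

namespace Matrix

variable {R : Type*} [CommRing R] {n m ι : Type*} [Fintype n] [Fintype m] [Fintype ι]
  [DecidableEq n] [DecidableEq m] [DecidableEq ι]

/-- Border `M` by unit rows and `W` by unit columns to get square matrices; their product is
block triangular with diagonal blocks the two minors on the right. -/
theorem sign_mul_det_mul_det_eq_of_mul_eq_zero (M : Matrix n ι R) (W : Matrix ι m R)
    (hMW : M * W = 0) (e₁ e₂ : n ⊕ m ≃ ι) :
    (Perm.sign (e₁.trans e₂.symm) : R) * (M.submatrix id (e₁ ∘ Sum.inl)).det *
        (W.submatrix (e₂ ∘ Sum.inr) id).det =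
      (M.submatrix id (e₂ ∘ Sum.inl)).det * (W.submatrix (e₁ ∘ Sum.inr) id).det := by
  set M' := fromRows M ((1 : Matrix ι ι R).submatrix (e₁ ∘ Sum.inr) id)
  set W' := fromCols ((1 : Matrix ι ι R).submatrix id (e₂ ∘ Sum.inl)) W
  have hM' : (M'.submatrix id e₁).det = (M.submatrix id (e₁ ∘ Sum.inl)).det := by
    have hblock : M'.submatrix id e₁ =
        fromBlocks (M.submatrix id (e₁ ∘ Sum.inl)) (M.submatrix id (e₁ ∘ Sum.inr)) 0 1 := by
      ext (_ | _) (_ | _) <;> simp [M', one_apply]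
    rw [hblock, det_fromBlocks_zero₂₁, det_one, mul_one]
  have hW' : (W'.submatrix e₂ id).det = (W.submatrix (e₂ ∘ Sum.inr) id).det := by
    have hblock : W'.submatrix e₂ id =
        fromBlocks 1 (W.submatrix (e₂ ∘ Sum.inl) id) 0 (W.submatrix (e₂ ∘ Sum.inr) id) := by
      ext (_ | _) (_ | _) <;> simp [W', one_apply]
    rw [hblock, det_fromBlocks_zero₂₁, det_one, one_mul]
  have hW'_perm : (W'.submatrix e₁ id).det =
      Perm.sign (e₁.trans e₂.symm) * (W'.submatrix e₂ id).det := by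
    rw [← det_permute, submatrix_submatrix]
    congr
    ext
    simp
  have hM'W' : M' * W' = fromBlocks (M.submatrix id (e₂ ∘ Sum.inl)) 0
      ((1 : Matrix ι ι R).submatrix (e₁ ∘ Sum.inr) (e₂ ∘ Sum.inl))
      (W.submatrix (e₁ ∘ Sum.inr) id) := by
    rw [fromRows_mul_fromCols, hMW]
    congr 1 <;> ext <;> simp [mul_apply, one_apply]
  have hdet := congrArg det hM'W'
  rw [det_fromBlocks_zero₁₂, ← submatrix_id_id (M' * W'), ← submatrix_mul_equiv M' W' id e₁ id,
    det_mul, hM', hW'_perm, hW'] at hdet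
  rw [← hdet]
  ring

end Matrix

section NatIndexed

variable {R : Type*} [CommRing R]

theorem det_mul_det_eq_of_sum_range_mul_eq_zero {N q : ℕ}
    (A F : ℕ → ℕ → R) (hAF : ∀ n < N, ∀ b < q, ∑ k ∈ range (N + q), A n k * F k b = 0) :
    (of fun i j : Fin N => A i j).det * (of fun i j : Fin q => F i j).det =
      (-1) ^ (N * q) * (of fun i j : Fin N => A i (q + j)).det *
        (of fun i j : Fin q => F (N + i) j).det := by
  have h := sign_mul_det_mul_det_eq_of_mul_eq_zero (of fun (i : Fin N) (k : Fin (N + q)) => A i k)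
    (of fun (k : Fin (N + q)) (j : Fin q) => F k j) ?_ finSumFinEquiv
    ((sumComm (Fin N) (Fin q)).trans (finSumFinEquiv.trans (finCongr (add_comm q N))))
  · rw [sign_finSumFinEquiv_trans_symm] at h
    simp only [submatrix, of_apply, Function.comp_apply, id, finSumFinEquiv_apply_left,
      finSumFinEquiv_apply_right, trans_apply, sumComm_apply, Sum.swap_inl, Sum.swap_inr,
      Fin.val_castAdd, Fin.val_natAdd, finCongr_apply, Fin.val_cast, Units.val_pow_eq_pow_val,
      Units.val_neg, Units.val_one, Int.cast_pow, Int.cast_neg, Int.cast_one] at h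
    have hs : ((-1 : R) ^ (N * q)) ^ 2 = 1 := by rw [← pow_mul, pow_mul', neg_one_sq, one_pow]
    linear_combination (-1 : R) ^ (N * q) * h -
      (of fun i j : Fin N => A i j).det * (of fun i j : Fin q => F i j).det * hs
  · ext n b
    simpa [mul_apply, Fin.sum_univ_eq_sum_range (fun k => A n k * F k b)] using
      hAF n n.isLt b b.isLt

noncomputable def natCharmatrix (T : ℕ → ℕ → R) (i j : ℕ) : R[X] :=
  (if i = j then X else 0) - C (T i j)

theorem det_natCharmatrix (T : ℕ → ℕ → R) (N : ℕ) :
    (of fun i j : Fin N => natCharmatrix T i j).det = (of fun i j : Fin N => T i j).charpoly := by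
  rw [charpoly]
  congr
  ext i j
  by_cases h : i = j
  · subst h
    simp [natCharmatrix, charmatrix_apply_eq]
  · simp [natCharmatrix, charmatrix_apply_ne _ _ _ h, Fin.val_ne_iff.mpr h]

theorem det_natCharmatrix_shift {q : ℕ} (hq : 1 ≤ q) (T : ℕ → ℕ → R)
    (hT : ∀ i j, i + q < j → T i j = 0) (N : ℕ) :
    (of fun i j : Fin N => natCharmatrix T i (q + j)).det =
      (-1) ^ N * C (∏ k ∈ range N, T k (k + q)) := by
  rw [det_of_isLowerTriangular]
  · rw [map_prod, ← Fin.prod_univ_eq_prod_range (fun k => C (T k (k + q))), ← Fin.prod_const,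
      ← prod_mul_distrib]
    refine prod_congr rfl fun i _ => ?_
    rw [of_apply, natCharmatrix, if_neg (by omega), add_comm q]
    ring
  · intro i j (hij : i < j)
    rw [of_apply, natCharmatrix, if_neg (by omega), hT _ _ (by omega), C_0, sub_zero]

theorem sum_range_natCharmatrix_mul_eq_zero {p q : ℕ} (T : ℕ → ℕ → R)
    (hband : ∀ i j, (j + p < i ∨ i + q < j) → T i j = 0) (f : ℕ → R[X])
    (hf : ∀ n, ∑ m ∈ Icc (n - p) (n + q), C (T n m) * f m = X * f n) {n K : ℕ} (hK : n + q < K) :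
    ∑ k ∈ range K, natCharmatrix T n k * f k = 0 := by
  have hIcc : ∑ k ∈ range K, C (T n k) * f k = ∑ k ∈ Icc (n - p) (n + q), C (T n k) * f k := by
    refine (sum_subset (fun k hk => ?_) fun k _ hk => ?_).symm
    · simp only [mem_Icc, mem_range] at hk ⊢
      omega
    · rw [hband n k (by simp only [mem_Icc] at hk; omega), C_0, zero_mul]
  simp only [natCharmatrix, sub_mul, ite_mul, zero_mul, sum_sub_distrib, sum_ite_eq,
    mem_range, if_pos (show n < K by omega), hIcc, hf, sub_self]

theorem det_unitLowerTriangular_eq_one {q : ℕ} (f : ℕ → ℕ → R)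
    (h0 : ∀ i j, i < j → j < q → f i j = 0) (h1 : ∀ j < q, f j j = 1) :
    (of fun i j : Fin q => f i j).det = 1 := by
  rw [det_of_isLowerTriangular]
  · exact prod_eq_one fun j _ => h1 j j.isLt
  · exact fun i j hij => h0 i j hij j.isLt

end NatIndexed

theorem charpoly_eq_det_right_recursion_general
    (p q : ℕ) (hq : 1 ≤ q)
    (T : ℕ → ℕ → ℝ)
    (hband : ∀ i j, (j + p < i ∨ i + q < j) → T i j = 0)
    (B : ℕ → ℕ → Polynomial ℝ)
    (hB0 : ∀ b, 1 ≤ b → b ≤ q → ∀ n, n < b - 1 → B b n = 0)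
    (hB1 : ∀ b, 1 ≤ b → b ≤ q → B b (b - 1) = 1)
    (hBrec : ∀ b, 1 ≤ b → b ≤ q → ∀ n,
      ∑ m ∈ Finset.Icc (n - p) (n + q), Polynomial.C (T n m) * B b m
        = Polynomial.X * B b n)
    (P : ℕ → Polynomial ℝ)
    (hP0 : P 0 = 1)
    (hPsucc : ∀ N, P (N + 1) = (Matrix.of fun i j : Fin (N + 1) => T i j).charpoly)
    (β : ℕ → ℝ)
    (hβ : ∀ N, β N = (-1 : ℝ) ^ ((q - 1) * N) * ∏ k ∈ Finset.range N, T k (k + q)) :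
    ∀ N, P N = Polynomial.C (β N) *
      (Matrix.of fun i b : Fin q => B ((b : ℕ) + 1) (N + (i : ℕ))).det := by
  intro N
  have hP : P N = (of fun i j : Fin N => T i j).charpoly := by
    cases N with
    | zero => simp [hP0]
    | succ N => exact hPsucc N
  have key := det_mul_det_eq_of_sum_range_mul_eq_zero (N := N) (q := q) (natCharmatrix T)
    (fun k b => B (b + 1) k) fun n hn b hb => sum_range_natCharmatrix_mul_eq_zero T hband _
      (hBrec (b + 1) (by omega) (by omega)) (by omega)
  rw [det_natCharmatrix, ← hP, det_natCharmatrix_shift hq T fun i j h => hband i j (Or.inr h),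
    det_unitLowerTriangular_eq_one _ (fun i b hib hb => hB0 (b + 1) (by omega) (by omega) i
      (by omega)) fun b hb => by simpa using hB1 (b + 1) (by omega) (by omega), mul_one] at key
  obtain ⟨r, rfl⟩ : ∃ r, q = r + 1 := ⟨q - 1, by omega⟩
  rw [key, hβ, Nat.add_sub_cancel, ← mul_assoc, ← pow_add,
    show N * (r + 1) + N = r * N + 2 * N by ring, pow_add,
    pow_mul (-1 : ℝ[X]) 2, neg_one_sq, one_pow, mul_one]
  simp only [C_mul, C_pow, C_neg, C_1]

/-- For a `(p,q)`-banded matrix with nonvanishing extreme diagonals, the characteristic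
polynomials of the leading principal submatrices satisfy `P_N = β_N · det B_N`, where
`B_N` is the `q×q` matrix of right recursion polynomials with `(i,b)` entry `B^{(b)}_{N+i}`. -/
theorem charpoly_eq_det_right_recursion
    (p q : ℕ) (hp : 1 ≤ p) (hq : 1 ≤ q)
    (T : ℕ → ℕ → ℝ)
    (hband : ∀ i j, (j + p < i ∨ i + q < j) → T i j = 0)
    (hext : ∀ n, T (n + p) n ≠ 0 ∧ T n (n + q) ≠ 0)
    (ξ : ℕ → ℕ → ℝ) (B : ℕ → ℕ → Polynomial ℝ)
    (hB0 : ∀ b, 1 ≤ b → b ≤ q → ∀ n, n < b - 1 → B b n = 0)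
    (hB1 : ∀ b, 1 ≤ b → b ≤ q → B b (b - 1) = 1)
    (hBconst : ∀ b, 1 ≤ b → b ≤ q → ∀ j, b ≤ j → j ≤ q - 1 → B b j = Polynomial.C (ξ b j))
    (hBrec : ∀ b, 1 ≤ b → b ≤ q → ∀ n,
      ∑ m ∈ Finset.Icc (n - p) (n + q), Polynomial.C (T n m) * B b m
        = Polynomial.X * B b n)
    (P : ℕ → Polynomial ℝ)
    (hP0 : P 0 = 1)
    (hPsucc : ∀ N, P (N + 1) = (Matrix.of fun i j : Fin (N + 1) => T i j).charpoly)
    (β : ℕ → ℝ)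
    (hβ : ∀ N, β N = (-1 : ℝ) ^ ((q - 1) * N) * ∏ k ∈ Finset.range N, T k (k + q)) :
    ∀ N, P N = Polynomial.C (β N) *
      (Matrix.of fun i b : Fin q => B ((b : ℕ) + 1) (N + (i : ℕ))).det :=
  charpoly_eq_det_right_recursion_general p q hq T hband B hB0 hB1 hBrec P hP0 hPsucc β hβ
end

section
/- Let T be a (p,q)-banded matrix with nonvanishing extreme diagonals, A^{(a)}_n the left recursion polynomials, and Q_{n,N} the associated determinantal polynomials. Then for every N ∈ ℕ: (i) Q_{N+j,N} = 0 for every j ∈ {1,…,p−1}; (ii) α_N · Q_{N,N} = P_N; and (iii) (−1)^{p−1} · α_{N+1} · Q_{N+p,N} = P_{N+1}, all as identities in ℝ[x]. -/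
/-!
Fix `N` and let `U = leftRecMatrix A p (N+p)` be the matrix whose first `p` rows are the vectors
`(A^{(a)}_m)_{m < N+p}`, completed by unit rows; by the normalisation of the `A^{(a)}` it is unit
upper triangular. Let `Y = truncCharmatrix T N (N+p)` be `x - T^{[N+p-1]}` with its last `p`
columns replaced by unit vectors, so that `det Y = P_N`. The recursion, which involves only rows
`m ≤ n + p < N + p` by the band condition, says that the first `p` rows of `U` annihilate the
first `N` columns of `Y`. Hence `U Y`, with its last `p` columns moved to the front, is block
lower triangular; its diagonal blocks are the transpose of `window A p N`, whose determinant is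
`Q_{N,N}`, and rows `p, …, N+p-1` of the first `N` columns of `x - T`, an upper triangular
matrix with diagonal `-T (k+p) k`. Comparing determinants gives (ii). In (i) the matrix has two
equal rows, and (iii) is (ii) at `N + 1` after a cyclic permutation of the rows.
-/

open Matrix Polynomial Finset Equiv

noncomputable section

namespace BandedMatrix

lemma sign_finRotate_pow (m n : ℕ) : Perm.sign (finRotate (m + n) ^ m) = (-1) ^ (m * n) := by
  rcases m with _ | m
  · simp
  · rw [map_pow, sign_finRotate, ← pow_mul,
      show (m + 1 + n - 1) * (m + 1) = (m + 1) * n + m * (m + 1) by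
        rw [show m + 1 + n - 1 = m + n by omega]; ring,
      pow_add, (Nat.even_mul_succ_self m).neg_one_pow, mul_one]

lemma val_finRotate_pow_apply {n k : ℕ} (hk : k < n) (i : Fin n) :
    ((finRotate n ^ k) i : ℕ) = (i + k) % n := by
  rw [← Perm.iterate_eq_pow, ← finCycle_eq_finRotate_iterate (k := ⟨k, hk⟩), finCycle_apply,
    Fin.val_add]

lemma finRotate_pow_apply_finSumFinEquiv {p N : ℕ} (hp : 0 < p) (x : Fin p ⊕ Fin N) :
    (finRotate (N + p) ^ N) (finCongr (add_comm p N) (finSumFinEquiv x))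
      = finSumFinEquiv x.swap := by
  ext
  rw [val_finRotate_pow_apply (by omega)]
  rcases x with a | k
  · simp only [finSumFinEquiv_apply_left, finCongr_apply, Fin.val_cast, Fin.val_castAdd,
      Sum.swap_inl, finSumFinEquiv_apply_right, Fin.val_natAdd]
    rw [Nat.mod_eq_of_lt (by omega), add_comm]
  · simp only [finSumFinEquiv_apply_right, finCongr_apply, Fin.val_cast, Fin.val_natAdd,
      Sum.swap_inr, finSumFinEquiv_apply_left, Fin.val_castAdd]
    rw [show p + (k : ℕ) + N = k + (N + p) by omega, Nat.add_mod_right,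
      Nat.mod_eq_of_lt (k.2.trans_le (Nat.le_add_right N p))]

lemma det_submatrix_eq_sign_mul_det {ι κ R : Type*} [Fintype ι] [DecidableEq ι] [Fintype κ]
    [DecidableEq κ] [CommRing R] (M : Matrix ι ι R) (e f : κ ≃ ι) (σ : Perm ι)
    (h : ∀ x, f x = σ (e x)) : (M.submatrix e f).det = Perm.sign σ * M.det := by
  have : M.submatrix e f = (M.submatrix id σ).submatrix e e := by ext; simp [h]
  rw [this, det_submatrix_equiv_self, det_permute']

variable {R : Type*} [CommRing R]

def leadingPrincipal (T : Matrix ℕ ℕ R) (N : ℕ) : Matrix (Fin N) (Fin N) R :=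
  T.submatrix Fin.val Fin.val

def infCharmatrix (T : Matrix ℕ ℕ R) : Matrix ℕ ℕ R[X] :=
  of fun i j => (if i = j then X else 0) - C (T i j)

def leftRecMatrix (A : ℕ → ℕ → R[X]) (p L : ℕ) : Matrix (Fin L) (Fin L) R[X] :=
  of fun i c => if (i : ℕ) < p then A (i + 1) c else (1 : Matrix (Fin L) (Fin L) R[X]) i c

def truncCharmatrix (T : Matrix ℕ ℕ R) (N L : ℕ) : Matrix (Fin L) (Fin L) R[X] :=
  of fun i c => if (c : ℕ) < N then infCharmatrix T i c else (1 : Matrix (Fin L) (Fin L) R[X]) i c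

def window (A : ℕ → ℕ → R[X]) (p N : ℕ) : Matrix (Fin p) (Fin p) R[X] :=
  of fun i a => A (a + 1) (N + i)

def qMatrix (A : ℕ → ℕ → R[X]) (p n N : ℕ) : Matrix (Fin p) (Fin p) R[X] :=
  of fun i a => if (i : ℕ) = 0 then A (a + 1) n else A (a + 1) (N + i)

variable {p q : ℕ} {T : Matrix ℕ ℕ R} {A : ℕ → ℕ → R[X]}

lemma infCharmatrix_submatrix_val (T : Matrix ℕ ℕ R) (N : ℕ) :
    (infCharmatrix T).submatrix Fin.val Fin.val = charmatrix (leadingPrincipal T N) := by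
  ext i j
  simp [infCharmatrix, leadingPrincipal, charmatrix_apply, diagonal_apply, Fin.val_inj]

lemma det_leftRecMatrix (hA0 : ∀ a, 1 ≤ a → a ≤ p → ∀ n, n < a - 1 → A a n = 0)
    (hA1 : ∀ a, 1 ≤ a → a ≤ p → A a (a - 1) = 1) (L : ℕ) :
    (leftRecMatrix A p L).det = 1 := by
  have htri : (leftRecMatrix A p L).BlockTriangular id := by
    intro i c (hci : c < i)
    simp only [leftRecMatrix, of_apply]
    split_ifs with hi
    · exact hA0 _ (by omega) (by omega) _ (by simpa using hci)
    · simp [one_apply, hci.ne']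
  rw [det_of_isUpperTriangular htri]
  refine prod_eq_one fun i _ => ?_
  simp only [leftRecMatrix, of_apply]
  split_ifs with hi
  · simpa using hA1 (i + 1) (by omega) (by omega)
  · simp

lemma det_truncCharmatrix (T : Matrix ℕ ℕ R) (N p : ℕ) :
    (truncCharmatrix T N (N + p)).det = (leadingPrincipal T N).charpoly := by
  rw [← det_submatrix_equiv_self finSumFinEquiv]
  set Y := (truncCharmatrix T N (N + p)).submatrix finSumFinEquiv finSumFinEquiv
  have hY : Y = fromBlocks (charmatrix (leadingPrincipal T N)) 0 Y.toBlocks₂₁ 1 := by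
    ext (i | i) (j | j) : 1
    · simp [Y, truncCharmatrix, ← infCharmatrix_submatrix_val]
    · simp [Y, truncCharmatrix, one_apply, Fin.ext_iff]; omega
    · rfl
    · simp [Y, truncCharmatrix, one_apply]
  rw [hY, det_fromBlocks_zero₁₂, det_one, mul_one, charpoly]

lemma sum_mul_infCharmatrix_eq_zero (hlow : ∀ i j, j + p < i → T i j = 0)
    (hup : ∀ i j, i + q < j → T i j = 0) {v : ℕ → R[X]} {n : ℕ}
    (hv : ∑ m ∈ Icc (n - q) (n + p), v m * C (T m n) = X * v n) {L : ℕ} (hL : n + p < L) :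
    ∑ m : Fin L, v m * infCharmatrix T m n = 0 := by
  have hsub : Icc (n - q) (n + p) ⊆ range L := fun m hm => by
    simp only [mem_Icc, mem_range] at hm ⊢; omega
  rw [Fin.sum_univ_eq_sum_range (fun m => v m * infCharmatrix T m n), ← sum_subset hsub]
  · simp [infCharmatrix, mul_sub, sum_sub_distrib, hv, mul_comm]
  · intro m _ hm
    simp only [mem_Icc, not_and_or, not_le] at hm
    have hT : T m n = 0 := hm.elim (fun _ => hup m n (by omega)) (hlow m n)
    simp [infCharmatrix, hT]
    omega

lemma det_infCharmatrix_submatrix_add_left (hp : 0 < p) (hlow : ∀ i j, j + p < i → T i j = 0)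
    (N : ℕ) :
    ((infCharmatrix T).submatrix (fun k : Fin N => p + k) Fin.val).det
      = (-1) ^ N * C (∏ k ∈ range N, T (k + p) k) := by
  have htri :
      ((infCharmatrix T).submatrix (fun k : Fin N => p + k) Fin.val).BlockTriangular id := by
    intro k n (hnk : n < k)
    simp [infCharmatrix, hlow (p + k) n (by omega)]
    omega
  rw [det_of_isUpperTriangular htri]
  calc _ = ∏ k : Fin N, -C (T (k + p) k) :=
        prod_congr rfl fun k _ => by simp [infCharmatrix, add_comm, hp.ne']
    _ = _ := by
      rw [prod_neg, card_univ, Fintype.card_fin, map_prod,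
        Fin.prod_univ_eq_prod_range (fun k => C (T (k + p) k))]

lemma submatrix_leftRecMatrix_mul_truncCharmatrix (hlow : ∀ i j, j + p < i → T i j = 0)
    (hup : ∀ i j, i + q < j → T i j = 0)
    (hArec : ∀ a, 1 ≤ a → a ≤ p → ∀ n,
      ∑ m ∈ Icc (n - q) (n + p), A a m * C (T m n) = X * A a n) (N : ℕ) :
    (leftRecMatrix A p (N + p) * truncCharmatrix T N (N + p)).submatrix
        (finSumFinEquiv.trans (finCongr (add_comm p N))) ((sumComm _ _).trans finSumFinEquiv)
      = fromBlocks (window A p N)ᵀ 0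
          (of fun (k : Fin N) (j : Fin p) => if p + (k : ℕ) = N + j then 1 else 0)
          ((infCharmatrix T).submatrix (fun k : Fin N => p + k) Fin.val) := by
  ext (a | k) (j | n) : 1
  · simp [mul_apply, leftRecMatrix, truncCharmatrix, window, one_apply]
  · simpa [mul_apply, leftRecMatrix, truncCharmatrix] using
      sum_mul_infCharmatrix_eq_zero hlow hup (hArec _ (by omega) (by omega) n) (by omega)
  · simp [mul_apply, leftRecMatrix, truncCharmatrix, one_apply]
    simp only [Fin.ext_iff, Fin.val_addNat, Fin.val_natAdd, add_comm]
  · simp [mul_apply, leftRecMatrix, truncCharmatrix, one_apply, add_comm]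

theorem charpoly_leadingPrincipal_eq (hp : 0 < p) (hlow : ∀ i j, j + p < i → T i j = 0)
    (hup : ∀ i j, i + q < j → T i j = 0)
    (hA0 : ∀ a, 1 ≤ a → a ≤ p → ∀ n, n < a - 1 → A a n = 0)
    (hA1 : ∀ a, 1 ≤ a → a ≤ p → A a (a - 1) = 1)
    (hArec : ∀ a, 1 ≤ a → a ≤ p → ∀ n,
      ∑ m ∈ Icc (n - q) (n + p), A a m * C (T m n) = X * A a n) (N : ℕ) :
    (leadingPrincipal T N).charpoly
      = C ((-1) ^ ((p - 1) * N) * ∏ k ∈ range N, T (k + p) k) * (window A p N).det := by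
  have hdet : (window A p N).det * ((-1) ^ N * C (∏ k ∈ range N, T (k + p) k))
      = (-1) ^ ((p - 1) * N) * (-1) ^ N * (leadingPrincipal T N).charpoly := by
    have h :=
      det_submatrix_eq_sign_mul_det (leftRecMatrix A p (N + p) * truncCharmatrix T N (N + p))
        (finSumFinEquiv.trans (finCongr (add_comm p N))) ((sumComm _ _).trans finSumFinEquiv)
        (finRotate (N + p) ^ N) fun x => (finRotate_pow_apply_finSumFinEquiv hp x).symm
    rw [submatrix_leftRecMatrix_mul_truncCharmatrix hlow hup hArec, det_fromBlocks_zero₁₂,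
      det_transpose, det_infCharmatrix_submatrix_add_left hp hlow, det_mul,
      det_leftRecMatrix hA0 hA1, one_mul, det_truncCharmatrix, sign_finRotate_pow] at h
    have hNp : N * p = (p - 1) * N + N := by
      rw [← Nat.succ_mul, Nat.succ_eq_add_one, Nat.sub_add_cancel hp, mul_comm]
    push_cast [hNp, pow_add] at h
    exact h
  simp only [map_mul, map_pow, map_neg, map_one]
  set s : R[X] := (-1) ^ N
  set t : R[X] := (-1) ^ ((p - 1) * N)
  have hs : s * s = 1 := by rw [← pow_add, ← two_mul, pow_mul]; simp
  have hts : t * s * (t * s) = 1 := by rw [← pow_add, ← pow_add, ← two_mul, pow_mul]; simp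
  linear_combination (-t * s) * hdet + t * (window A p N).det * C (∏ k ∈ range N, T (k + p) k) * hs
    - (leadingPrincipal T N).charpoly * hts

lemma qMatrix_self (A : ℕ → ℕ → R[X]) (p N : ℕ) : qMatrix A p N N = window A p N := by
  ext i a : 1
  by_cases hi : (i : ℕ) = 0 <;> simp [qMatrix, window, hi]

lemma det_qMatrix_add_of_lt (A : ℕ → ℕ → R[X]) (N : ℕ) {j : ℕ} (hj : 0 < j) (hjp : j < p) :
    (qMatrix A p (N + j) N).det = 0 :=
  det_zero_of_row_eq (i := ⟨0, by omega⟩) (j := ⟨j, hjp⟩) (by simp [Fin.ext_iff]; omega)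
    (by ext a; simp [qMatrix])

lemma det_window_succ (A : ℕ → ℕ → R[X]) (hp : 0 < p) (N : ℕ) :
    (window A p (N + 1)).det = (-1) ^ (p - 1) * (qMatrix A p (N + p) N).det := by
  obtain ⟨p, rfl⟩ : ∃ p', p = p' + 1 := ⟨p - 1, by omega⟩
  have : window A (p + 1) (N + 1)
      = (qMatrix A _ (N + (p + 1)) N).submatrix (finRotate _) id := by
    ext i a : 1
    simp only [submatrix_apply, id_eq, qMatrix, window, of_apply, coe_finRotate]
    by_cases h : i = Fin.last p <;> simp [h, add_right_comm, add_assoc]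
  rw [this, det_permute, sign_finRotate]
  simp

end BandedMatrix

end

open BandedMatrix in
theorem determinantal_polynomials_Q_properties_general
    (p q : ℕ) (hp : 1 ≤ p)
    (T : ℕ → ℕ → ℝ)
    (hband : ∀ i j, (j + p < i ∨ i + q < j) → T i j = 0)
    (A : ℕ → ℕ → Polynomial ℝ)
    (hA0 : ∀ a, 1 ≤ a → a ≤ p → ∀ n, n < a - 1 → A a n = 0)
    (hA1 : ∀ a, 1 ≤ a → a ≤ p → A a (a - 1) = 1)
    (hArec : ∀ a, 1 ≤ a → a ≤ p → ∀ n,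
      ∑ m ∈ Finset.Icc (n - q) (n + p), A a m * Polynomial.C (T m n)
        = Polynomial.X * A a n)
    (P : ℕ → Polynomial ℝ)
    (hP0 : P 0 = 1)
    (hPsucc : ∀ N, P (N + 1) = (Matrix.of fun i j : Fin (N + 1) => T i j).charpoly)
    (α : ℕ → ℝ)
    (hα : ∀ N, α N = (-1 : ℝ) ^ ((p - 1) * N) * ∏ k ∈ Finset.range N, T (k + p) k)
    (Q : ℕ → ℕ → Polynomial ℝ)
    (hQ : ∀ n N, Q n N = (Matrix.of fun i a : Fin p =>
        if (i : ℕ) = 0 then A ((a : ℕ) + 1) n else A ((a : ℕ) + 1) (N + (i : ℕ))).det) :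
    ∀ N : ℕ,
      (∀ j, 1 ≤ j → j ≤ p - 1 → Q (N + j) N = 0) ∧
      Polynomial.C (α N) * Q N N = P N ∧
      Polynomial.C ((-1 : ℝ) ^ (p - 1) * α (N + 1)) * Q (N + p) N = P (N + 1) := by
  have hQ' : ∀ n N, Q n N = (qMatrix A p n N).det := hQ
  have hP : ∀ N, P N = C (α N) * (window A p N).det := by
    intro N
    rw [hα, ← charpoly_leadingPrincipal_eq hp (fun i j h => hband i j (.inl h))
      (fun i j h => hband i j (.inr h)) hA0 hA1 hArec]
    cases N with
    | zero => rw [hP0, charpoly_isEmpty]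
    | succ N => exact hPsucc N
  intro N
  refine ⟨fun j hj hjp => ?_, ?_, ?_⟩
  · rw [hQ', det_qMatrix_add_of_lt A N hj (by omega)]
  · rw [hQ', qMatrix_self, hP]
  · rw [hQ', hP, det_window_succ A hp, map_mul, map_pow, map_neg, map_one]
    ring

/-- Properties of the determinantal polynomials `Q_{n,N}` built from the left recursion
polynomials of a `(p,q)`-banded matrix with nonvanishing extreme diagonals:
(i) `Q_{N+j,N} = 0` for `j ∈ {1,…,p−1}`; (ii) `α_N · Q_{N,N} = P_N`;
(iii) `(−1)^{p−1} · α_{N+1} · Q_{N+p,N} = P_{N+1}`. -/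
theorem determinantal_polynomials_Q_properties
    (p q : ℕ) (hp : 1 ≤ p) (hq : 1 ≤ q)
    (T : ℕ → ℕ → ℝ)
    (hband : ∀ i j, (j + p < i ∨ i + q < j) → T i j = 0)
    (hext : ∀ n, T (n + p) n ≠ 0 ∧ T n (n + q) ≠ 0)
    (ν : ℕ → ℕ → ℝ) (A : ℕ → ℕ → Polynomial ℝ)
    (hA0 : ∀ a, 1 ≤ a → a ≤ p → ∀ n, n < a - 1 → A a n = 0)
    (hA1 : ∀ a, 1 ≤ a → a ≤ p → A a (a - 1) = 1)
    (hAconst : ∀ a, 1 ≤ a → a ≤ p → ∀ j, a ≤ j → j ≤ p - 1 → A a j = Polynomial.C (ν a j))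
    (hArec : ∀ a, 1 ≤ a → a ≤ p → ∀ n,
      ∑ m ∈ Finset.Icc (n - q) (n + p), A a m * Polynomial.C (T m n)
        = Polynomial.X * A a n)
    (P : ℕ → Polynomial ℝ)
    (hP0 : P 0 = 1)
    (hPsucc : ∀ N, P (N + 1) = (Matrix.of fun i j : Fin (N + 1) => T i j).charpoly)
    (α : ℕ → ℝ)
    (hα : ∀ N, α N = (-1 : ℝ) ^ ((p - 1) * N) * ∏ k ∈ Finset.range N, T (k + p) k)
    (Q : ℕ → ℕ → Polynomial ℝ)
    (hQ : ∀ n N, Q n N = (Matrix.of fun i a : Fin p =>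
        if (i : ℕ) = 0 then A ((a : ℕ) + 1) n else A ((a : ℕ) + 1) (N + (i : ℕ))).det) :
    ∀ N : ℕ,
      (∀ j, 1 ≤ j → j ≤ p - 1 → Q (N + j) N = 0) ∧
      Polynomial.C (α N) * Q N N = P N ∧
      Polynomial.C ((-1 : ℝ) ^ (p - 1) * α (N + 1)) * Q (N + p) N = P (N + 1) :=
  determinantal_polynomials_Q_properties_general p q hp T hband A hA0 hA1 hArec P hP0 hPsucc α hα Q
    hQ
end

section
/- Let T be a (p,q)-banded matrix with nonvanishing extreme diagonals, B^{(b)}_n the right recursion polynomials, and R_{n,N} the associated determinantal polynomials. Then for every N ∈ ℕ: (i) R_{N+j,N} = 0 for every j ∈ {1,…,q−1}; (ii) β_N · R_{N,N} = P_N; and (iii) (−1)^{q−1} · β_{N+1} · R_{N+q,N} = P_{N+1}, all as identities in ℝ[x]. -/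
/-!
Let `A` be the block of `x·I − T` on rows `0, …, N` and columns `0, …, N + q`, and `K` the
`(N + q + 1) × q` matrix `(B^{(b)}_c)`. Since row `n` of `T` vanishes beyond column `n + q`, the
recursion says exactly `A K = 0`. For any such pair (`m` rows, `m + q` columns), bordering `A` below by
the unit rows `e_0, …, e_{q-1}` and `K` on the left by the unit columns `e_0, …, e_{m-1}` and
multiplying gives the complementary-minor identity
`det A_{first m cols} · det K_{first q rows} = (-1)^{mq} det A_{last m cols} · det K_{last q rows}`.
Here these minors are `P_{N+1}`, `1` (the initial conditions make the top of `K` unitriangular),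
a lower-triangular determinant with diagonal `−T k (k+q)`, and `R_{N+1,N+1}`: this is (ii).
Part (i) is a determinant with two equal rows, and (iii) is (ii) at `N + 1` after a cyclic shift of
the rows.
-/

open Matrix

theorem val_finRotate_pow_apply (n k : ℕ) (i : Fin n) :
    ((finRotate n ^ k) i : ℕ) = (i + k) % n := by
  induction k with
  | zero => simp [Nat.mod_eq_of_lt i.2]
  | succ k ih =>
    obtain ⟨n, rfl⟩ : ∃ n', n = n' + 1 := Nat.exists_eq_add_one.2 (Fin.pos i)
    rw [pow_succ', Equiv.Perm.mul_apply, finRotate_apply, Fin.val_add, ih, Fin.val_one',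
      Nat.add_mod_mod, Nat.mod_add_mod, add_assoc]

section ComplementaryMinors

variable {R : Type*} [CommRing R] (m q : ℕ)

-- `Fin m ⊕ Fin q` indexes the positions `0, …, m + q - 1` through `finSumFinEquiv`.

def borderUnitRows (A : ℕ → ℕ → R) : Matrix (Fin m ⊕ Fin q) (Fin m ⊕ Fin q) R :=
  fromRows (of fun i c => A i (finSumFinEquiv c))
    (of fun j c => if (finSumFinEquiv c : ℕ) = j then 1 else 0)

def borderUnitCols (K : ℕ → ℕ → R) : Matrix (Fin m ⊕ Fin q) (Fin m ⊕ Fin q) R :=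
  fromCols (of fun r k => if (finSumFinEquiv r : ℕ) = k then 1 else 0)
    (of fun r b => K (finSumFinEquiv r) b)

theorem det_borderUnitRows (A : ℕ → ℕ → R) :
    (borderUnitRows m q A).det = (-1) ^ (m * q) * (of fun i k : Fin m => A i (k + q)).det := by
  set σ : Equiv.Perm (Fin m ⊕ Fin q) := finSumFinEquiv.symm.permCongr (finRotate (m + q) ^ q)
  have hσ : ∀ c, (finSumFinEquiv (σ c) : ℕ) = (finSumFinEquiv c + q) % (m + q) := fun c => by
    simp [σ, Equiv.permCongr_apply, val_finRotate_pow_apply]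
  have hsign : (Equiv.Perm.sign σ : R) = (-1) ^ (m * q) := by
    have hq : (m + q - 1) * q = m * q + q * (q - 1) := by
      rcases Nat.eq_zero_or_pos q with rfl | h
      · simp
      · rw [Nat.add_sub_assoc h, add_mul, mul_comm (q - 1)]
    rw [Equiv.Perm.sign_permCongr, map_pow, sign_finRotate, ← pow_mul, hq, pow_add,
      (Nat.even_mul_pred_self q).neg_one_pow, mul_one]
    push_cast; rfl
  have hrot : (borderUnitRows m q A).submatrix id σ
      = fromBlocks (of fun i k : Fin m => A i (k + q))
          (of fun (i : Fin m) (j : Fin q) => A i j) 0 1 := by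
    ext (i | j) (k | j')
    all_goals simp only [borderUnitRows, submatrix_apply, id, fromRows_apply_inl,
      fromRows_apply_inr, of_apply, hσ, fromBlocks_apply₁₁, fromBlocks_apply₁₂,
      fromBlocks_apply₂₁, fromBlocks_apply₂₂, finSumFinEquiv_apply_left,
      finSumFinEquiv_apply_right, Fin.val_castAdd, Fin.val_natAdd]
    · rw [Nat.mod_eq_of_lt (by omega)]
    · rw [show m + j' + q = j' + (m + q) by omega, Nat.add_mod_right,
        Nat.mod_eq_of_lt (by omega)]
    · rw [Nat.mod_eq_of_lt (by omega), if_neg (by omega), Matrix.zero_apply]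
    · rw [show m + j' + q = j' + (m + q) by omega, Nat.add_mod_right,
        Nat.mod_eq_of_lt (by omega)]
      simp [one_apply, Fin.val_inj, eq_comm]
  have hperm := det_permute' σ (borderUnitRows m q A)
  rw [hrot, det_fromBlocks_zero₂₁, det_one, mul_one, hsign] at hperm
  rw [hperm, ← mul_assoc, ← pow_add, Even.neg_one_pow ⟨_, rfl⟩, one_mul]

theorem det_borderUnitCols (K : ℕ → ℕ → R) :
    (borderUnitCols m q K).det = (of fun j b : Fin q => K (m + j) b).det := by
  have hblocks : borderUnitCols m q K
      = fromBlocks 1 (of fun (i : Fin m) (b : Fin q) => K i b) 0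
          (of fun j b : Fin q => K (m + j) b) := by
    ext (i | j) (k | b)
    all_goals simp only [borderUnitCols, fromCols_apply_inl, fromCols_apply_inr, of_apply,
      finSumFinEquiv_apply_left, finSumFinEquiv_apply_right, Fin.val_castAdd, Fin.val_natAdd,
      Fin.val_inj, fromBlocks_apply₁₁, fromBlocks_apply₁₂, fromBlocks_apply₂₁,
      fromBlocks_apply₂₂, one_apply, Matrix.zero_apply]
    exact if_neg (by omega)
  rw [hblocks, det_fromBlocks_zero₂₁, det_one, one_mul]

theorem borderUnitRows_mul_borderUnitCols (A K : ℕ → ℕ → R)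
    (hAK : ∀ (i : Fin m) (b : Fin q), ∑ c ∈ Finset.range (m + q), A i c * K c b = 0) :
    borderUnitRows m q A * borderUnitCols m q K
      = fromBlocks (of fun i k : Fin m => A i k) 0
          (of fun (j : Fin q) (k : Fin m) => if (k : ℕ) = j then 1 else 0)
          (of fun j b : Fin q => K j b) := by
  have hsum : ∀ f : ℕ → R,
      ∑ x : Fin m ⊕ Fin q, f (finSumFinEquiv x) = ∑ c ∈ Finset.range (m + q), f c :=
    fun f => by rw [Equiv.sum_comp finSumFinEquiv (fun c => f c), Fin.sum_univ_eq_sum_range]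
  ext (i | j) (k | b)
  all_goals simp only [mul_apply, borderUnitRows, borderUnitCols, fromRows_apply_inl,
      fromRows_apply_inr, fromCols_apply_inl, fromCols_apply_inr, of_apply,
      fromBlocks_apply₁₁, fromBlocks_apply₁₂, fromBlocks_apply₂₁, fromBlocks_apply₂₂]
  · rw [hsum fun c => A i c * if c = k then 1 else 0]
    simp only [mul_ite, mul_one, mul_zero, Finset.sum_ite_eq', Finset.mem_range]
    exact if_pos (by omega)
  · rw [hsum fun c => A i c * K c b, hAK, Matrix.zero_apply]
  · rw [hsum fun c => (if c = j then 1 else 0) * if c = k then 1 else 0]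
    simp only [mul_ite, mul_one, mul_zero, Finset.sum_ite_eq', Finset.mem_range]
    exact if_pos (by omega)
  · rw [hsum fun c => (if c = j then 1 else 0) * K c b]
    simp only [ite_mul, one_mul, zero_mul, Finset.sum_ite_eq', Finset.mem_range]
    exact if_pos (by omega)

theorem det_mul_det_eq_of_sum_mul_eq_zero (A K : ℕ → ℕ → R)
    (hAK : ∀ (i : Fin m) (b : Fin q), ∑ c ∈ Finset.range (m + q), A i c * K c b = 0) :
    (of fun i k : Fin m => A i k).det * (of fun j b : Fin q => K j b).det
      = (-1) ^ (m * q) * (of fun i k : Fin m => A i (k + q)).det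
          * (of fun j b : Fin q => K (m + j) b).det := by
  have hprod := congrArg det (borderUnitRows_mul_borderUnitCols m q A K hAK)
  rw [det_mul, det_fromBlocks_zero₁₂, det_borderUnitRows, det_borderUnitCols] at hprod
  exact hprod.symm

end ComplementaryMinors

open Polynomial

section BandedRecursion

variable {R : Type*} [CommRing R] {p q : ℕ} {T : ℕ → ℕ → R} {B : ℕ → ℕ → R[X]}

noncomputable def infiniteCharmatrix (T : ℕ → ℕ → R) (i j : ℕ) : R[X] :=
  (if i = j then X else 0) - C (T i j)

theorem charpoly_eq_det_infiniteCharmatrix (N : ℕ) :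
    (of fun i j : Fin N => T i j).charpoly
      = (of fun i j : Fin N => infiniteCharmatrix T i j).det := by
  unfold Matrix.charpoly
  congr 1
  ext i j
  simp [infiniteCharmatrix, charmatrix_apply, diagonal_apply, Fin.val_inj]

theorem sum_range_infiniteCharmatrix_mul_eq_zero
    (hband : ∀ i j, (j + p < i ∨ i + q < j) → T i j = 0) {v : ℕ → R[X]}
    (hv : ∀ n, ∑ m ∈ Finset.Icc (n - p) (n + q), C (T n m) * v m = X * v n)
    {n K : ℕ} (hK : n + q < K) :
    ∑ c ∈ Finset.range K, infiniteCharmatrix T n c * v c = 0 := by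
  have hT : ∑ c ∈ Finset.range K, C (T n c) * v c = X * v n := by
    rw [← hv n]
    refine (Finset.sum_subset (fun c hc => ?_) fun c _ hc => ?_).symm
    · simp only [Finset.mem_Icc, Finset.mem_range] at hc ⊢
      omega
    · simp only [Finset.mem_Icc, not_and_or, not_le] at hc
      rw [hband n c (by omega), map_zero, zero_mul]
  simp only [infiniteCharmatrix, sub_mul, Finset.sum_sub_distrib, ite_mul, zero_mul, hT,
    Finset.sum_ite_eq, Finset.mem_range, if_pos (show n < K by omega), sub_self]

theorem det_infiniteCharmatrix_shift (hq : 1 ≤ q) (hband : ∀ i j, i + q < j → T i j = 0)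
    (m : ℕ) :
    (of fun i k : Fin m => infiniteCharmatrix T i (k + q)).det
      = (-1) ^ m * C (∏ k ∈ Finset.range m, T k (k + q)) := by
  have hdiag : ∀ i : ℕ, infiniteCharmatrix T i (i + q) = -C (T i (i + q)) := fun i => by
    rw [infiniteCharmatrix, if_neg (by omega), zero_sub]
  rw [det_of_isLowerTriangular]
  · simp only [of_apply, hdiag, Finset.prod_neg, Finset.card_univ, Fintype.card_fin, map_prod]
    rw [Fin.prod_univ_eq_prod_range (fun k => C (T k (k + q)))]
  · intro i k hik
    have hik : (i : ℕ) < k := hik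
    simp only [of_apply, infiniteCharmatrix, if_neg (show (i : ℕ) ≠ k + q by omega),
      hband i (k + q) (by omega), map_zero, sub_zero]

theorem det_initialWindow_eq_one
    (hB0 : ∀ b, 1 ≤ b → b ≤ q → ∀ n, n < b - 1 → B b n = 0)
    (hB1 : ∀ b, 1 ≤ b → b ≤ q → B b (b - 1) = 1) :
    (of fun j b : Fin q => B (b + 1) j).det = 1 := by
  rw [det_of_isLowerTriangular]
  · exact Finset.prod_eq_one fun i _ => by simpa using hB1 (i + 1) (by omega) (by omega)
  · intro i j hij
    have hij : (i : ℕ) < j := hij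
    simpa using hB0 (j + 1) (by omega) (by omega) i (by omega)

theorem charpoly_eq_C_mul_det_window (hq : 1 ≤ q)
    (hband : ∀ i j, (j + p < i ∨ i + q < j) → T i j = 0)
    (hB0 : ∀ b, 1 ≤ b → b ≤ q → ∀ n, n < b - 1 → B b n = 0)
    (hB1 : ∀ b, 1 ≤ b → b ≤ q → B b (b - 1) = 1)
    (hBrec : ∀ b, 1 ≤ b → b ≤ q → ∀ n,
      ∑ m ∈ Finset.Icc (n - p) (n + q), C (T n m) * B b m = X * B b n) (N : ℕ) :
    (of fun i j : Fin (N + 1) => T i j).charpoly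
      = C ((-1) ^ ((q - 1) * (N + 1)) * ∏ k ∈ Finset.range (N + 1), T k (k + q))
        * (of fun i b : Fin q => B (b + 1) (N + 1 + i)).det := by
  have key := det_mul_det_eq_of_sum_mul_eq_zero (N + 1) q (infiniteCharmatrix T)
    (fun c b => B (b + 1) c) fun i b =>
      sum_range_infiniteCharmatrix_mul_eq_zero hband (hBrec (b + 1) (by omega) b.2) (by omega)
  rw [← charpoly_eq_det_infiniteCharmatrix, det_initialWindow_eq_one hB0 hB1, mul_one,
    det_infiniteCharmatrix_shift hq (fun i j h => hband i j (Or.inr h))] at key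
  obtain ⟨q, rfl⟩ : ∃ q', q = q' + 1 := ⟨q - 1, by omega⟩
  have hexp : (N + 1) * (q + 1) + (N + 1) = q * (N + 1) + 2 * (N + 1) := by ring
  rw [key, map_mul, map_pow, map_neg, map_one, ← mul_assoc, ← pow_add, hexp, pow_add,
    pow_mul (-1) 2, neg_one_sq, one_pow, mul_one, Nat.add_sub_cancel]

end BandedRecursion

section Windows

variable {S : Type*} {q : ℕ}

def topRowWindow (f : ℕ → Fin q → S) (n N : ℕ) : Matrix (Fin q) (Fin q) S :=
  of fun i b => if (i : ℕ) = 0 then f n b else f (N + i) b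

theorem topRowWindow_self (f : ℕ → Fin q → S) (N : ℕ) :
    topRowWindow f N N = of fun (i : Fin q) b => f (N + i) b := by
  ext i b
  by_cases h : (i : ℕ) = 0 <;> simp [topRowWindow, h]

theorem det_topRowWindow_eq_zero [CommRing S] (f : ℕ → Fin q → S) {N j : ℕ} (hj : 1 ≤ j)
    (hjq : j < q) :
    (topRowWindow f (N + j) N).det = 0 :=
  det_zero_of_row_eq (i := ⟨0, by omega⟩) (j := ⟨j, hjq⟩) (by simp only [ne_eq, Fin.ext_iff]; omega)
    (funext fun b => by simp [topRowWindow])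

theorem det_topRowWindow_add_self [CommRing S] (f : ℕ → Fin q → S) (N : ℕ) :
    (topRowWindow f (N + q) N).det
      = (-1) ^ (q - 1) * (of fun (i : Fin q) b => f (N + 1 + i) b).det := by
  have hrot : (topRowWindow f (N + q) N).submatrix (finRotate q) id
      = of fun (i : Fin q) b => f (N + 1 + i) b := by
    ext i b
    have hi := val_finRotate_pow_apply q 1 i
    rw [pow_one] at hi
    simp only [topRowWindow, submatrix_apply, id, of_apply, hi]
    rcases Nat.lt_or_ge (i + 1) q with h | h
    · rw [Nat.mod_eq_of_lt h, if_neg (by omega), Nat.add_comm (i : ℕ) 1, Nat.add_assoc]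
    · obtain h : (i : ℕ) + 1 = q := by omega
      rw [h, Nat.mod_self, if_pos rfl, show N + q = N + 1 + i by omega]
  have hperm := det_permute (finRotate q) (topRowWindow f (N + q) N)
  rw [hrot, sign_finRotate] at hperm
  rw [hperm]
  push_cast
  rw [← mul_assoc, ← pow_add, Even.neg_one_pow ⟨_, rfl⟩, one_mul]

end Windows

theorem determinantal_polynomials_R_properties_general
    (p q : ℕ) (hq : 1 ≤ q)
    (T : ℕ → ℕ → ℝ)
    (hband : ∀ i j, (j + p < i ∨ i + q < j) → T i j = 0)
    (B : ℕ → ℕ → Polynomial ℝ)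
    (hB0 : ∀ b, 1 ≤ b → b ≤ q → ∀ n, n < b - 1 → B b n = 0)
    (hB1 : ∀ b, 1 ≤ b → b ≤ q → B b (b - 1) = 1)
    (hBrec : ∀ b, 1 ≤ b → b ≤ q → ∀ n,
      ∑ m ∈ Finset.Icc (n - p) (n + q), Polynomial.C (T n m) * B b m
        = Polynomial.X * B b n)
    (P : ℕ → Polynomial ℝ)
    (hP0 : P 0 = 1)
    (hPsucc : ∀ N, P (N + 1) = (Matrix.of fun i j : Fin (N + 1) => T i j).charpoly)
    (β : ℕ → ℝ)
    (hβ : ∀ N, β N = (-1 : ℝ) ^ ((q - 1) * N) * ∏ k ∈ Finset.range N, T k (k + q))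
    (R : ℕ → ℕ → Polynomial ℝ)
    (hR : ∀ n N, R n N = (Matrix.of fun i b : Fin q =>
        if (i : ℕ) = 0 then B ((b : ℕ) + 1) n else B ((b : ℕ) + 1) (N + (i : ℕ))).det) :
    ∀ N : ℕ,
      (∀ j, 1 ≤ j → j ≤ q - 1 → R (N + j) N = 0) ∧
      Polynomial.C (β N) * R N N = P N ∧
      Polynomial.C ((-1 : ℝ) ^ (q - 1) * β (N + 1)) * R (N + q) N = P (N + 1) := by
  set f : ℕ → Fin q → ℝ[X] := fun n b => B (b + 1) n
  have hRf : ∀ n N, R n N = (topRowWindow f n N).det := hR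
  have hdiag : ∀ N, C (β N) * R N N = P N := by
    rintro (_ | N)
    · rw [hRf, topRowWindow_self, hβ, hP0]
      simpa [f] using det_initialWindow_eq_one hB0 hB1
    · rw [hRf, topRowWindow_self, hPsucc,
        charpoly_eq_C_mul_det_window hq hband hB0 hB1 hBrec, hβ]
  intro N
  refine ⟨fun j hj hjq => ?_, hdiag N, ?_⟩
  · rw [hRf]
    exact det_topRowWindow_eq_zero f hj (by omega)
  · rw [hRf, det_topRowWindow_add_self, ← hdiag (N + 1), hRf, topRowWindow_self, map_mul,
      map_pow, map_neg, map_one, mul_mul_mul_comm, ← pow_add, Even.neg_one_pow ⟨_, rfl⟩, one_mul]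

/-- Properties of the determinantal polynomials `R_{n,N}` built from the right recursion
polynomials of a `(p,q)`-banded matrix with nonvanishing extreme diagonals:
(i) `R_{N+j,N} = 0` for `j ∈ {1,…,q−1}`; (ii) `β_N · R_{N,N} = P_N`;
(iii) `(−1)^{q−1} · β_{N+1} · R_{N+q,N} = P_{N+1}`. -/
theorem determinantal_polynomials_R_properties
    (p q : ℕ) (hp : 1 ≤ p) (hq : 1 ≤ q)
    (T : ℕ → ℕ → ℝ)
    (hband : ∀ i j, (j + p < i ∨ i + q < j) → T i j = 0)
    (hext : ∀ n, T (n + p) n ≠ 0 ∧ T n (n + q) ≠ 0)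
    (ξ : ℕ → ℕ → ℝ) (B : ℕ → ℕ → Polynomial ℝ)
    (hB0 : ∀ b, 1 ≤ b → b ≤ q → ∀ n, n < b - 1 → B b n = 0)
    (hB1 : ∀ b, 1 ≤ b → b ≤ q → B b (b - 1) = 1)
    (hBconst : ∀ b, 1 ≤ b → b ≤ q → ∀ j, b ≤ j → j ≤ q - 1 → B b j = Polynomial.C (ξ b j))
    (hBrec : ∀ b, 1 ≤ b → b ≤ q → ∀ n,
      ∑ m ∈ Finset.Icc (n - p) (n + q), Polynomial.C (T n m) * B b m
        = Polynomial.X * B b n)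
    (P : ℕ → Polynomial ℝ)
    (hP0 : P 0 = 1)
    (hPsucc : ∀ N, P (N + 1) = (Matrix.of fun i j : Fin (N + 1) => T i j).charpoly)
    (β : ℕ → ℝ)
    (hβ : ∀ N, β N = (-1 : ℝ) ^ ((q - 1) * N) * ∏ k ∈ Finset.range N, T k (k + q))
    (R : ℕ → ℕ → Polynomial ℝ)
    (hR : ∀ n N, R n N = (Matrix.of fun i b : Fin q =>
        if (i : ℕ) = 0 then B ((b : ℕ) + 1) n else B ((b : ℕ) + 1) (N + (i : ℕ))).det) :
    ∀ N : ℕ,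
      (∀ j, 1 ≤ j → j ≤ q - 1 → R (N + j) N = 0) ∧
      Polynomial.C (β N) * R N N = P N ∧
      Polynomial.C ((-1 : ℝ) ^ (q - 1) * β (N + 1)) * R (N + q) N = P (N + 1) :=
  determinantal_polynomials_R_properties_general p q hq T hband B hB0 hB1 hBrec P hP0 hPsucc β hβ R
    hR
end

section
/- Let T be a (p,q)-banded matrix with nonvanishing extreme diagonals, A^{(a)}_n the left recursion polynomials, and Q_{n,N} the associated determinantal polynomials. Then for all n, N ∈ ℕ, the identity ∑_{m = max(0, n−q)}^{n+p} Q_{m,N} · T m n = x · Q_{n,N} holds in ℝ[x]; that is, the semi-infinite row vector (Q_{0,N}, Q_{1,N}, …) is a formal left eigenvector of T with eigenvalue x. -/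
/-!
`Q_{n,N}` depends on `n` only through its first row `(A^{(1)}_n, …, A^{(p)}_n)`, and the
determinant is linear in that row, so the left recursion satisfied entrywise by the rows passes
to `Q_{·,N}`.
-/

open Polynomial

theorem Matrix.det_updateRow_sum_smul {n R ι : Type*} [DecidableEq n] [Fintype n] [CommRing R]
    (M : Matrix n n R) (j : n) (s : Finset ι) (c : ι → R) (v : ι → n → R) :
    (M.updateRow j (∑ i ∈ s, c i • v i)).det = ∑ i ∈ s, c i * (M.updateRow j (v i)).det := by
  have h := map_sum (Matrix.detRowAlternating.toMultilinearMap.toLinearMap M j)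
    (fun i => c i • v i) s
  simp only [map_smul, smul_eq_mul] at h
  exact h

theorem Matrix.of_ite_zero_eq_updateRow {α : Type*} {p : ℕ} (hp : 0 < p)
    (f : Fin p → α) (g : Fin p → Fin p → α) :
    (Matrix.of fun i a : Fin p => if (i : ℕ) = 0 then f a else g i a)
      = (Matrix.of g).updateRow ⟨0, hp⟩ f := by
  ext i a
  by_cases hi : (i : ℕ) = 0
  · simp [show i = ⟨0, hp⟩ from Fin.ext hi]
  · simp [hi, Matrix.updateRow_ne (show i ≠ ⟨0, hp⟩ from fun h => hi (congrArg Fin.val h))]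

theorem determinantal_polynomials_Q_left_eigenvector_general
    (p q : ℕ) (hp : 1 ≤ p)
    (T : ℕ → ℕ → ℝ)
    (A : ℕ → ℕ → Polynomial ℝ)
    (hArec : ∀ a, 1 ≤ a → a ≤ p → ∀ n,
      ∑ m ∈ Finset.Icc (n - q) (n + p), A a m * Polynomial.C (T m n)
        = Polynomial.X * A a n)
    (Q : ℕ → ℕ → Polynomial ℝ)
    (hQ : ∀ n N, Q n N = (Matrix.of fun i a : Fin p =>
        if (i : ℕ) = 0 then A ((a : ℕ) + 1) n else A ((a : ℕ) + 1) (N + (i : ℕ))).det) :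
    ∀ n N : ℕ,
      ∑ m ∈ Finset.Icc (n - q) (n + p), Q m N * Polynomial.C (T m n)
        = Polynomial.X * Q n N := by
  intro n N
  let row (m : ℕ) : Fin p → ℝ[X] := fun a => A (a + 1) m
  let M : Matrix (Fin p) (Fin p) ℝ[X] := Matrix.of fun i a => A (a + 1) (N + i)
  have hQ_row (m : ℕ) : Q m N = (M.updateRow ⟨0, hp⟩ (row m)).det := by
    rw [hQ, Matrix.of_ite_zero_eq_updateRow hp]
  have hrow_rec : ∑ m ∈ Finset.Icc (n - q) (n + p), C (T m n) • row m = (X : ℝ[X]) • row n := by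
    funext a
    simpa [Finset.sum_apply, mul_comm] using hArec (a + 1) (Nat.le_add_left 1 a) a.isLt n
  calc ∑ m ∈ Finset.Icc (n - q) (n + p), Q m N * C (T m n)
      = (M.updateRow ⟨0, hp⟩ (∑ m ∈ Finset.Icc (n - q) (n + p), C (T m n) • row m)).det := by
        simp only [Matrix.det_updateRow_sum_smul, hQ_row, mul_comm]
    _ = X * Q n N := by
        rw [hrow_rec, Matrix.det_updateRow_smul, hQ_row]

/-- The determinantal polynomials `Q_{n,N}` satisfy the same left recursion as the left
recursion polynomials: the semi-infinite row vector `(Q_{0,N}, Q_{1,N}, …)` is a formal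
left eigenvector of the banded matrix `T` with eigenvalue `x`. -/
theorem determinantal_polynomials_Q_left_eigenvector
    (p q : ℕ) (hp : 1 ≤ p) (hq : 1 ≤ q)
    (T : ℕ → ℕ → ℝ)
    (hband : ∀ i j, (j + p < i ∨ i + q < j) → T i j = 0)
    (hext : ∀ n, T (n + p) n ≠ 0 ∧ T n (n + q) ≠ 0)
    (ν : ℕ → ℕ → ℝ) (A : ℕ → ℕ → Polynomial ℝ)
    (hA0 : ∀ a, 1 ≤ a → a ≤ p → ∀ n, n < a - 1 → A a n = 0)
    (hA1 : ∀ a, 1 ≤ a → a ≤ p → A a (a - 1) = 1)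
    (hAconst : ∀ a, 1 ≤ a → a ≤ p → ∀ j, a ≤ j → j ≤ p - 1 → A a j = Polynomial.C (ν a j))
    (hArec : ∀ a, 1 ≤ a → a ≤ p → ∀ n,
      ∑ m ∈ Finset.Icc (n - q) (n + p), A a m * Polynomial.C (T m n)
        = Polynomial.X * A a n)
    (Q : ℕ → ℕ → Polynomial ℝ)
    (hQ : ∀ n N, Q n N = (Matrix.of fun i a : Fin p =>
        if (i : ℕ) = 0 then A ((a : ℕ) + 1) n else A ((a : ℕ) + 1) (N + (i : ℕ))).det) :
    ∀ n N : ℕ,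
      ∑ m ∈ Finset.Icc (n - q) (n + p), Q m N * Polynomial.C (T m n)
        = Polynomial.X * Q n N :=
  determinantal_polynomials_Q_left_eigenvector_general p q hp T A hArec Q hQ
end

section
/- Let T be a (p,q)-banded matrix with nonvanishing extreme diagonals, B^{(b)}_n the right recursion polynomials, and R_{n,N} the associated determinantal polynomials. Then for all n, N ∈ ℕ, the identity ∑_{m = max(0, n−p)}^{n+q} T n m · R_{m,N} = x · R_{n,N} holds in ℝ[x]; that is, the semi-infinite column vector (R_{0,N}, R_{1,N}, …)ᵀ is a formal right eigenvector of T with eigenvalue x. -/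
/-- The determinantal polynomials `R_{n,N}` satisfy the same right recursion as the right
recursion polynomials: the semi-infinite column vector `(R_{0,N}, R_{1,N}, …)ᵀ` is a formal
right eigenvector of the banded matrix `T` with eigenvalue `x`. -/
theorem determinantal_polynomials_R_right_eigenvector
    (p q : ℕ) (hp : 1 ≤ p) (hq : 1 ≤ q)
    (T : ℕ → ℕ → ℝ)
    (hband : ∀ i j, (j + p < i ∨ i + q < j) → T i j = 0)
    (hext : ∀ n, T (n + p) n ≠ 0 ∧ T n (n + q) ≠ 0)
    (ξ : ℕ → ℕ → ℝ) (B : ℕ → ℕ → Polynomial ℝ)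
    (hB0 : ∀ b, 1 ≤ b → b ≤ q → ∀ n, n < b - 1 → B b n = 0)
    (hB1 : ∀ b, 1 ≤ b → b ≤ q → B b (b - 1) = 1)
    (hBconst : ∀ b, 1 ≤ b → b ≤ q → ∀ j, b ≤ j → j ≤ q - 1 → B b j = Polynomial.C (ξ b j))
    (hBrec : ∀ b, 1 ≤ b → b ≤ q → ∀ n,
      ∑ m ∈ Finset.Icc (n - p) (n + q), Polynomial.C (T n m) * B b m
        = Polynomial.X * B b n)
    (R : ℕ → ℕ → Polynomial ℝ)
    (hR : ∀ n N, R n N = (Matrix.of fun i b : Fin q =>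
        if (i : ℕ) = 0 then B ((b : ℕ) + 1) n else B ((b : ℕ) + 1) (N + (i : ℕ))).det) :
    ∀ n N : ℕ,
      ∑ m ∈ Finset.Icc (n - p) (n + q), Polynomial.C (T n m) * R m N
        = Polynomial.X * R n N := by
  obtain ⟨q', rfl⟩ : ∃ q', q = q' + 1 := ⟨q - 1, (Nat.succ_pred_eq_of_pos hq).symm⟩
  intro n N
  set C : Fin (q' + 1) → Polynomial ℝ := fun j =>
    (Matrix.of (fun i b : Fin q' =>
        B (((j.succAbove b : Fin (q' + 1)) : ℕ) + 1) (N + ((i : ℕ) + 1)))).det with hC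
  have hexp : ∀ m, R m N
      = ∑ j : Fin (q' + 1), (-1) ^ (j : ℕ) * (B ((j : ℕ) + 1) m * C j) := by
    intro m
    rw [hR, Matrix.det_succ_row_zero]
    refine Finset.sum_congr rfl fun j _ => ?_
    have : ((Matrix.of fun i b : Fin (q' + 1) =>
        if (i : ℕ) = 0 then B ((b : ℕ) + 1) m else B ((b : ℕ) + 1) (N + (i : ℕ))).submatrix
        Fin.succ j.succAbove)
      = Matrix.of (fun i b : Fin q' =>
        B (((j.succAbove b : Fin (q' + 1)) : ℕ) + 1) (N + ((i : ℕ) + 1))) := by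
      ext i b
      simp [Matrix.submatrix_apply]
    rw [this]
    simp [hC]
    ring
  have hrec : ∀ j : Fin (q' + 1),
      ∑ m ∈ Finset.Icc (n - p) (n + (q' + 1)), Polynomial.C (T n m) * B ((j : ℕ) + 1) m
        = Polynomial.X * B ((j : ℕ) + 1) n := by
    intro j
    exact hBrec ((j : ℕ) + 1) (Nat.le_add_left 1 _) (Nat.succ_le_succ (Nat.le_of_lt_succ j.isLt)) n
  calc ∑ m ∈ Finset.Icc (n - p) (n + (q' + 1)), Polynomial.C (T n m) * R m N
      = ∑ j : Fin (q' + 1), (-1) ^ (j : ℕ) *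
          ((∑ m ∈ Finset.Icc (n - p) (n + (q' + 1)), Polynomial.C (T n m) * B ((j : ℕ) + 1) m)
            * C j) := by
        simp only [hexp, Finset.mul_sum, Finset.sum_mul]
        rw [Finset.sum_comm]
        exact Finset.sum_congr rfl fun j _ => Finset.sum_congr rfl fun m _ => by ring
    _ = Polynomial.X * R n N := by
        simp only [hrec, hexp, Finset.mul_sum]
        exact Finset.sum_congr rfl fun j _ => by ring
end

section
/- Let T be a (p,q)-banded matrix with nonvanishing extreme diagonals, with left recursion polynomials A^{(a)}_n, right recursion polynomials B^{(b)}_n, and determinantal polynomials Q_{n,N}, R_{n,N}. Fix N ∈ ℕ and let λ ∈ ℝ be a root of the characteristic polynomial P_{N+1}. Then the row vector v ∈ ℝ^{N+1} with entries v_n = Q_{n,N}(λ) (0 ≤ n ≤ N) satisfies v · T^{[N]} = λ · v, and the column vector u ∈ ℝ^{N+1} with entries u_n = R_{n,N}(λ) satisfies T^{[N]} · u = λ · u. -/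
/-!
Both sides are the same statement, the right one for the transpose of `T`, so consider the left
one. Evaluated at `λ`, the sequences `A^{(a)}` solve the left recursion
`λ f_n = ∑_m f_m T_{m n}`, and their values at `0, …, p-1` form a unitriangular matrix, so every
solution is a combination of them. Being linear in its first row, `n ↦ Q_{n,N}(λ)` is a solution;
it vanishes at `N+1, …, N+p-1` (two equal rows), so it is a left eigenvector of `T^{[N]}` as soon as
`Q_{N+p,N}(λ) = 0`. For this, extend a left eigenvector of `T^{[N]}` for `λ` by zero: it solves the
recursion up to `n = N`, hence equals a nonzero combination `∑_a c_a A^{(a)}(λ)` which vanishes at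
`N+1, …, N+p`; then `c` lies in the kernel of the matrix whose determinant is `Q_{N+p,N}(λ)`.
-/

open Finset Matrix Polynomial

variable {K : Type*} [CommRing K]

def IsBanded (p q : ℕ) (T : ℕ → ℕ → K) : Prop :=
  ∀ i j, (j + p < i ∨ i + q < j) → T i j = 0

def LeftRecursionAt (p q : ℕ) (T : ℕ → ℕ → K) (x : K) (f : ℕ → K) (n : ℕ) : Prop :=
  ∑ m ∈ Icc (n - q) (n + p), f m * T m n = x * f n

def leadingSubmatrix (T : ℕ → ℕ → K) (N : ℕ) : Matrix (Fin (N + 1)) (Fin (N + 1)) K :=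
  of fun i j => T i j

/-- `Q_{m,N}(λ)`, with `α a` standing for `A^{(a+1)}(λ)`. -/
def determinantal {p : ℕ} (α : Fin p → ℕ → K) (N m : ℕ) : K :=
  (of fun i a : Fin p => if (i : ℕ) = 0 then α a m else α a (N + i)).det

theorem Matrix.exists_vecMul_eq_smul_of_eval_charpoly_eq_zero [IsDomain K] {ι : Type*}
    [Fintype ι] [DecidableEq ι] {M : Matrix ι ι K} {x : K} (h : M.charpoly.eval x = 0) :
    ∃ v ≠ 0, vecMul v M = x • v := by
  rw [eval_charpoly, ← exists_vecMul_eq_zero_iff] at h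
  obtain ⟨v, hv, hvM⟩ := h
  refine ⟨v, hv, ?_⟩
  rwa [vecMul_sub, sub_eq_zero, scalar_apply, vecMul_diagonal_const, op_smul_eq_smul,
    eq_comm] at hvM

namespace LeftRecursionAt

variable {p q : ℕ} {T : ℕ → ℕ → K} {x : K} {n : ℕ}

theorem sub {f g : ℕ → K} (hf : LeftRecursionAt p q T x f n) (hg : LeftRecursionAt p q T x g n) :
    LeftRecursionAt p q T x (f - g) n := by
  simp only [LeftRecursionAt, Pi.sub_apply, sub_mul, sum_sub_distrib, mul_sub] at *
  rw [hf, hg]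

theorem sum_mul {ι : Type*} [Fintype ι] (c : ι → K) {F : ι → ℕ → K}
    (hF : ∀ i, LeftRecursionAt p q T x (F i) n) :
    LeftRecursionAt p q T x (fun m => ∑ i, c i * F i m) n := by
  unfold LeftRecursionAt at *
  simp_rw [Finset.sum_mul, mul_assoc]
  rw [Finset.sum_comm]
  simp_rw [← Finset.mul_sum, hF, Finset.mul_sum, mul_left_comm]

theorem eq_zero_of_init_eq_zero [NoZeroDivisors K] (hp : 0 < p) (hext : ∀ n, T (n + p) n ≠ 0)
    {N : ℕ} {g : ℕ → K} (hg : ∀ n ≤ N, LeftRecursionAt p q T x g n) (hinit : ∀ j < p, g j = 0) :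
    ∀ m ≤ N + p, g m = 0 := by
  intro m
  induction m using Nat.strong_induction_on with
  | _ k ih =>
    intro hk
    obtain hkp | hkp := lt_or_ge k p
    · exact hinit k hkp
    obtain ⟨n, rfl⟩ : ∃ n, k = n + p := ⟨k - p, by omega⟩
    -- in the recursion at `n`, `g (n + p)` is the last term and all earlier ones vanish
    have hrec := hg n (by omega)
    rw [LeftRecursionAt, Finset.sum_eq_single_of_mem (n + p) (mem_Icc.2 ⟨by omega, le_rfl⟩)
      (fun m hm hne => by
        have := (mem_Icc.1 hm).2
        rw [ih m (by omega) (by omega), zero_mul]),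
      ih n (by omega) (by omega), mul_zero] at hrec
    exact (mul_eq_zero.mp hrec).resolve_right (hext n)

end LeftRecursionAt

variable {p q : ℕ} {T : ℕ → ℕ → K} {α : Fin p → ℕ → K} {N : ℕ} {x : K}

theorem sum_Icc_mul_eq_vecMul_leadingSubmatrix (hband : IsBanded p q T) {f : ℕ → K}
    (hf : ∀ m, N < m → m ≤ N + p → f m = 0) (n : Fin (N + 1)) :
    ∑ m ∈ Icc (n - q) (n + p), f m * T m n
      = vecMul (fun m : Fin (N + 1) => f m) (leadingSubmatrix T N) n := by
  have hIcc : ∑ m ∈ Icc (n - q) (n + p), f m * T m n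
      = ∑ m ∈ range (N + p + 1), f m * T m n := by
    refine sum_subset (fun m hm => ?_) (fun m _ hm => ?_)
    · have := (mem_Icc.1 hm).2
      have := n.isLt
      simp only [mem_range]
      omega
    · rw [hband m n (by simp only [mem_Icc, not_and_or, not_le] at hm; omega), mul_zero]
  have hrange : ∑ m ∈ range (N + 1), f m * T m n
      = ∑ m ∈ range (N + p + 1), f m * T m n := by
    refine sum_subset (fun m hm => ?_) (fun m hm hm' => ?_)
    · simp only [mem_range] at hm ⊢
      omega
    · simp only [mem_range, not_lt] at hm hm'
      rw [hf m (by omega) (by omega), zero_mul]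
  rw [hIcc, ← hrange, ← Fin.sum_univ_eq_sum_range (fun m => f m * T m n)]
  rfl

theorem leftRecursionAt_iff_vecMul_leadingSubmatrix (hband : IsBanded p q T) {f : ℕ → K}
    (hf : ∀ m, N < m → m ≤ N + p → f m = 0) :
    (∀ n ≤ N, LeftRecursionAt p q T x f n) ↔
      vecMul (fun m : Fin (N + 1) => f m) (leadingSubmatrix T N)
        = x • fun m : Fin (N + 1) => f m := by
  constructor
  · intro h
    funext n
    rw [← sum_Icc_mul_eq_vecMul_leadingSubmatrix hband hf, h n (by omega)]
    rfl
  · intro h n hn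
    simpa [LeftRecursionAt, ← sum_Icc_mul_eq_vecMul_leadingSubmatrix hband hf] using
      congrFun h ⟨n, by omega⟩

theorem exists_sum_mul_eq_of_unitriangular (hα0 : ∀ (a : Fin p) (j : ℕ), j < a → α a j = 0)
    (hα1 : ∀ a : Fin p, α a a = 1) (f : ℕ → K) :
    ∃ c : Fin p → K, ∀ j : Fin p, ∑ a, c a * α a j = f j := by
  set U : Matrix (Fin p) (Fin p) K := of fun j a => α a j
  have hU : IsUnit U.det := by
    rw [det_of_isLowerTriangular U fun j a h => hα0 a j h]
    simp [U, hα1]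
  refine ⟨U⁻¹ *ᵥ fun j : Fin p => f j, fun j => ?_⟩
  have hUc : U *ᵥ (U⁻¹ *ᵥ fun j : Fin p => f j) = fun j : Fin p => f j := by
    rw [mulVec_mulVec, mul_nonsing_inv U hU, one_mulVec]
  simpa [mulVec, dotProduct, U, mul_comm] using congrFun hUc j

theorem exists_ne_zero_sum_mul_eq_zero [IsDomain K] (hp : 0 < p) (hband : IsBanded p q T)
    (hext : ∀ n, T (n + p) n ≠ 0)
    (hα0 : ∀ (a : Fin p) (j : ℕ), j < a → α a j = 0) (hα1 : ∀ a : Fin p, α a a = 1)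
    (hrec : ∀ a, ∀ n ≤ N, LeftRecursionAt p q T x (α a) n) {v : Fin (N + 1) → K} (hv : v ≠ 0)
    (heig : vecMul v (leadingSubmatrix T N) = x • v) :
    ∃ c : Fin p → K, c ≠ 0 ∧ ∀ m, N < m → m ≤ N + p → ∑ a, c a * α a m = 0 := by
  set f : ℕ → K := fun m => if h : m < N + 1 then v ⟨m, h⟩ else 0
  have hfv : (fun m : Fin (N + 1) => f m) = v := funext fun m => dif_pos m.isLt
  have hf0 : ∀ m, N < m → f m = 0 := fun m hm => dif_neg (by omega)
  have hf : ∀ n ≤ N, LeftRecursionAt p q T x f n :=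
    (leftRecursionAt_iff_vecMul_leadingSubmatrix hband fun m hm _ => hf0 m hm).2
      (by rw [hfv]; exact heig)
  obtain ⟨c, hc⟩ := exists_sum_mul_eq_of_unitriangular hα0 hα1 f
  set g : ℕ → K := f - fun m => ∑ a, c a * α a m
  have hg : ∀ m ≤ N + p, g m = 0 :=
    LeftRecursionAt.eq_zero_of_init_eq_zero hp hext
      (fun n hn => (hf n hn).sub (LeftRecursionAt.sum_mul c fun a => hrec a n hn))
      (fun j hj => by simp [g, hc ⟨j, hj⟩])
  refine ⟨c, fun hc0 => hv ?_, fun m hm hmp => ?_⟩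
  · rw [← hfv]
    funext m
    simpa [g, hc0] using hg m (by omega)
  · simpa [g, hf0 m hm] using hg m hmp

theorem exists_determinantal_eq_sum_mul (hp : 0 < p) :
    ∃ κ : Fin p → K, ∀ m, determinantal α N m = ∑ a, κ a * α a m := by
  set M : Matrix (Fin p) (Fin p) K := of fun i a => α a (N + i)
  refine ⟨Mᵀ.adjugate ⟨0, hp⟩, fun m => ?_⟩
  have hupd : (of fun i a : Fin p => if (i : ℕ) = 0 then α a m else α a (N + i))
      = M.updateRow ⟨0, hp⟩ fun a => α a m := by
    ext i a
    by_cases hi : (i : ℕ) = 0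
    · simp [show i = ⟨0, hp⟩ from Fin.ext hi]
    · simp [hi, M, updateRow_ne (show i ≠ ⟨0, hp⟩ from fun h => hi (congrArg Fin.val h))]
  rw [determinantal, hupd, ← cramer_transpose_apply, cramer_eq_adjugate_mulVec]
  rfl

theorem leftRecursionAt_determinantal (hp : 0 < p) {n : ℕ}
    (hrec : ∀ a, LeftRecursionAt p q T x (α a) n) :
    LeftRecursionAt p q T x (determinantal α N) n := by
  obtain ⟨κ, hκ⟩ := exists_determinantal_eq_sum_mul (α := α) (N := N) hp
  rw [show determinantal α N = _ from funext hκ]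
  exact LeftRecursionAt.sum_mul κ hrec

theorem determinantal_add_eq_zero {j : ℕ} (hj : 0 < j) (hjp : j < p) :
    determinantal α N (N + j) = 0 :=
  det_zero_of_row_eq (i := ⟨0, by omega⟩) (j := ⟨j, hjp⟩) (by simp [Fin.ext_iff]; omega)
    (funext fun a => by simp [hj.ne'])

theorem determinantal_add_self_eq_zero [IsDomain K] {c : Fin p → K} (hc : c ≠ 0)
    (hcα : ∀ m, N < m → m ≤ N + p → ∑ a, c a * α a m = 0) :
    determinantal α N (N + p) = 0 := by
  refine exists_mulVec_eq_zero_iff.1 ⟨c, hc, funext fun i => ?_⟩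
  by_cases hi : (i : ℕ) = 0
  · simpa [mulVec, dotProduct, hi, mul_comm] using hcα (N + p) (by omega) le_rfl
  · simpa [mulVec, dotProduct, hi, mul_comm] using hcα (N + i) (by omega) (by omega)

theorem vecMul_determinantal_eq_smul [IsDomain K] (hp : 0 < p) (hband : IsBanded p q T)
    (hext : ∀ n, T (n + p) n ≠ 0)
    (hα0 : ∀ (a : Fin p) (j : ℕ), j < a → α a j = 0) (hα1 : ∀ a : Fin p, α a a = 1)
    (hrec : ∀ a n, LeftRecursionAt p q T x (α a) n)
    (hroot : (leadingSubmatrix T N).charpoly.eval x = 0) :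
    vecMul (fun n : Fin (N + 1) => determinantal α N n) (leadingSubmatrix T N)
      = x • fun n : Fin (N + 1) => determinantal α N n := by
  obtain ⟨v, hv, heig⟩ := exists_vecMul_eq_smul_of_eval_charpoly_eq_zero hroot
  obtain ⟨c, hc, hcα⟩ :=
    exists_ne_zero_sum_mul_eq_zero hp hband hext hα0 hα1 (fun a n _ => hrec a n) hv heig
  refine (leftRecursionAt_iff_vecMul_leadingSubmatrix hband fun m hm hmp => ?_).1
    fun n _ => leftRecursionAt_determinantal hp fun a => hrec a n
  obtain ⟨j, rfl⟩ : ∃ j, m = N + j := ⟨m - N, by omega⟩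
  obtain hjp | rfl := (show j ≤ p by omega).lt_or_eq
  · exact determinantal_add_eq_zero (by omega) hjp
  · exact determinantal_add_self_eq_zero hc hcα

theorem vecMul_eval_det_eq_smul [IsDomain K] (hp : 1 ≤ p) (hband : IsBanded p q T)
    (hext : ∀ n, T (n + p) n ≠ 0) {A : ℕ → ℕ → K[X]}
    (hA0 : ∀ a, 1 ≤ a → a ≤ p → ∀ n, n < a - 1 → A a n = 0)
    (hA1 : ∀ a, 1 ≤ a → a ≤ p → A a (a - 1) = 1)
    (hArec : ∀ a, 1 ≤ a → a ≤ p → ∀ n,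
      ∑ m ∈ Icc (n - q) (n + p), A a m * C (T m n) = X * A a n)
    {Q : ℕ → ℕ → K[X]}
    (hQ : ∀ n N, Q n N = (of fun i a : Fin p =>
        if (i : ℕ) = 0 then A ((a : ℕ) + 1) n else A ((a : ℕ) + 1) (N + (i : ℕ))).det)
    (hroot : (leadingSubmatrix T N).charpoly.eval x = 0) :
    vecMul (fun n : Fin (N + 1) => (Q n N).eval x) (leadingSubmatrix T N)
      = x • fun n : Fin (N + 1) => (Q n N).eval x := by
  set α : Fin p → ℕ → K := fun a m => (A (a + 1) m).eval x
  have hQα : ∀ n, (Q n N).eval x = determinantal α N n := by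
    intro n
    rw [hQ, ← coe_evalRingHom, RingHom.map_det]
    congr 1
    ext i a
    by_cases hi : (i : ℕ) = 0 <;> simp [hi, α]
  simp only [hQα]
  refine vecMul_determinantal_eq_smul hp hband hext (fun a j hj => ?_) (fun a => ?_)
    (fun a n => ?_) hroot
  · simp [α, hA0 (a + 1) (by omega) a.isLt j (by omega)]
  · simpa [α] using congrArg (eval x) (hA1 (a + 1) (by omega) a.isLt)
  · simpa [LeftRecursionAt, α, eval_finsetSum] using
      congrArg (eval x) (hArec (a + 1) (by omega) a.isLt n)

theorem determinantal_evaluations_are_eigenvectors_general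
    (p q : ℕ) (hp : 1 ≤ p) (hq : 1 ≤ q)
    (T : ℕ → ℕ → ℝ)
    (hband : ∀ i j, (j + p < i ∨ i + q < j) → T i j = 0)
    (hext : ∀ n, T (n + p) n ≠ 0 ∧ T n (n + q) ≠ 0)
    (A : ℕ → ℕ → Polynomial ℝ)
    (hA0 : ∀ a, 1 ≤ a → a ≤ p → ∀ n, n < a - 1 → A a n = 0)
    (hA1 : ∀ a, 1 ≤ a → a ≤ p → A a (a - 1) = 1)
    (hArec : ∀ a, 1 ≤ a → a ≤ p → ∀ n,
      ∑ m ∈ Finset.Icc (n - q) (n + p), A a m * Polynomial.C (T m n)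
        = Polynomial.X * A a n)
    (B : ℕ → ℕ → Polynomial ℝ)
    (hB0 : ∀ b, 1 ≤ b → b ≤ q → ∀ n, n < b - 1 → B b n = 0)
    (hB1 : ∀ b, 1 ≤ b → b ≤ q → B b (b - 1) = 1)
    (hBrec : ∀ b, 1 ≤ b → b ≤ q → ∀ n,
      ∑ m ∈ Finset.Icc (n - p) (n + q), Polynomial.C (T n m) * B b m
        = Polynomial.X * B b n)
    (P : ℕ → Polynomial ℝ)
    (hPsucc : ∀ N, P (N + 1) = (Matrix.of fun i j : Fin (N + 1) => T i j).charpoly)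
    (Q : ℕ → ℕ → Polynomial ℝ)
    (hQ : ∀ n N, Q n N = (Matrix.of fun i a : Fin p =>
        if (i : ℕ) = 0 then A ((a : ℕ) + 1) n else A ((a : ℕ) + 1) (N + (i : ℕ))).det)
    (R : ℕ → ℕ → Polynomial ℝ)
    (hR : ∀ n N, R n N = (Matrix.of fun i b : Fin q =>
        if (i : ℕ) = 0 then B ((b : ℕ) + 1) n else B ((b : ℕ) + 1) (N + (i : ℕ))).det)
    (N : ℕ) (lam : ℝ) (hroot : (P (N + 1)).eval lam = 0) :
    Matrix.vecMul (fun n : Fin (N + 1) => (Q (n : ℕ) N).eval lam)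
        (Matrix.of fun i j : Fin (N + 1) => T i j)
      = lam • (fun n : Fin (N + 1) => (Q (n : ℕ) N).eval lam) ∧
    Matrix.mulVec (Matrix.of fun i j : Fin (N + 1) => T i j)
        (fun n : Fin (N + 1) => (R (n : ℕ) N).eval lam)
      = lam • (fun n : Fin (N + 1) => (R (n : ℕ) N).eval lam) := by
  rw [hPsucc] at hroot
  have htranspose : leadingSubmatrix (fun i j => T j i) N = (leadingSubmatrix T N)ᵀ := rfl
  have hright := vecMul_eval_det_eq_smul (T := fun i j => T j i) hq
    (fun i j h => hband j i h.symm) (fun n => (hext n).2) hB0 hB1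
    (fun b hb1 hbq n => by simpa only [mul_comm] using hBrec b hb1 hbq n) hR
    (by rwa [htranspose, charpoly_transpose])
  rw [htranspose, vecMul_transpose] at hright
  exact ⟨vecMul_eval_det_eq_smul hp hband (fun n => (hext n).1) hA0 hA1 hArec hQ hroot, hright⟩

/-- If `λ` is a root of the characteristic polynomial `P_{N+1}` of the leading principal
submatrix `T^{[N]}` of a `(p,q)`-banded matrix with nonvanishing extreme diagonals, then the
vector of evaluations of the determinantal polynomials `Q_{n,N}` at `λ` is a left eigenvector
of `T^{[N]}`, and the vector of evaluations of `R_{n,N}` at `λ` is a right eigenvector. -/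
theorem determinantal_evaluations_are_eigenvectors
    (p q : ℕ) (hp : 1 ≤ p) (hq : 1 ≤ q)
    (T : ℕ → ℕ → ℝ)
    (hband : ∀ i j, (j + p < i ∨ i + q < j) → T i j = 0)
    (hext : ∀ n, T (n + p) n ≠ 0 ∧ T n (n + q) ≠ 0)
    (ν : ℕ → ℕ → ℝ) (A : ℕ → ℕ → Polynomial ℝ)
    (hA0 : ∀ a, 1 ≤ a → a ≤ p → ∀ n, n < a - 1 → A a n = 0)
    (hA1 : ∀ a, 1 ≤ a → a ≤ p → A a (a - 1) = 1)
    (hAconst : ∀ a, 1 ≤ a → a ≤ p → ∀ j, a ≤ j → j ≤ p - 1 → A a j = Polynomial.C (ν a j))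
    (hArec : ∀ a, 1 ≤ a → a ≤ p → ∀ n,
      ∑ m ∈ Finset.Icc (n - q) (n + p), A a m * Polynomial.C (T m n)
        = Polynomial.X * A a n)
    (ξ : ℕ → ℕ → ℝ) (B : ℕ → ℕ → Polynomial ℝ)
    (hB0 : ∀ b, 1 ≤ b → b ≤ q → ∀ n, n < b - 1 → B b n = 0)
    (hB1 : ∀ b, 1 ≤ b → b ≤ q → B b (b - 1) = 1)
    (hBconst : ∀ b, 1 ≤ b → b ≤ q → ∀ j, b ≤ j → j ≤ q - 1 → B b j = Polynomial.C (ξ b j))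
    (hBrec : ∀ b, 1 ≤ b → b ≤ q → ∀ n,
      ∑ m ∈ Finset.Icc (n - p) (n + q), Polynomial.C (T n m) * B b m
        = Polynomial.X * B b n)
    (P : ℕ → Polynomial ℝ)
    (hP0 : P 0 = 1)
    (hPsucc : ∀ N, P (N + 1) = (Matrix.of fun i j : Fin (N + 1) => T i j).charpoly)
    (Q : ℕ → ℕ → Polynomial ℝ)
    (hQ : ∀ n N, Q n N = (Matrix.of fun i a : Fin p =>
        if (i : ℕ) = 0 then A ((a : ℕ) + 1) n else A ((a : ℕ) + 1) (N + (i : ℕ))).det)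
    (R : ℕ → ℕ → Polynomial ℝ)
    (hR : ∀ n N, R n N = (Matrix.of fun i b : Fin q =>
        if (i : ℕ) = 0 then B ((b : ℕ) + 1) n else B ((b : ℕ) + 1) (N + (i : ℕ))).det)
    (N : ℕ) (lam : ℝ) (hroot : (P (N + 1)).eval lam = 0) :
    Matrix.vecMul (fun n : Fin (N + 1) => (Q (n : ℕ) N).eval lam)
        (Matrix.of fun i j : Fin (N + 1) => T i j)
      = lam • (fun n : Fin (N + 1) => (Q (n : ℕ) N).eval lam) ∧
    Matrix.mulVec (Matrix.of fun i j : Fin (N + 1) => T i j)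
        (fun n : Fin (N + 1) => (R (n : ℕ) N).eval lam)
      = lam • (fun n : Fin (N + 1) => (R (n : ℕ) N).eval lam) :=
  determinantal_evaluations_are_eigenvectors_general p q hp hq T hband hext A hA0 hA1 hArec B hB0
    hB1 hBrec P hPsucc Q hQ R hR N lam hroot
end

section
/- Let n ∈ ℕ and let f, g ∈ ℝ[x] be monic polynomials with deg f = n+1 and deg g = n. Assume f has n+1 distinct real roots λ_1 > λ_2 > … > λ_{n+1}, g has n distinct real roots μ_1 > … > μ_n, and the roots strictly interlace: λ_{k+1} < μ_k < λ_k for every k ∈ {1,…,n}. Then the Wronskian is strictly positive everywhere: f'(x)·g(x) − g'(x)·f(x) > 0 for every x ∈ ℝ. -/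
/-!
Write `f = ∏ (X - λ_k)` and `f_k = f / (X - λ_k)`. Lagrange interpolation at the roots of `f`
gives `g = ∑ c_k f_k` with `c_k = g(λ_k) / f_k(λ_k)`, and `W(f_k, f) = f_k²`, so the Wronskian is
`∑ c_k f_k²`. Interlacing pairs each factor `λ_k - μ_j` of `g(λ_k)` with a factor `λ_k - λ_i` of
`f_k(λ_k)` of the same sign, so every `c_k` is positive, and the `f_k` have no common zero.
-/

open Polynomial Finset Lagrange

namespace Polynomial

variable {R ι : Type*} [CommRing R]

theorem wronskian_X_sub_C_mul_right (p : R[X]) (a : R) :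
    wronskian p ((X - C a) * p) = p ^ 2 := by
  simp only [wronskian, derivative_mul, derivative_sub, derivative_X, derivative_C]
  ring

theorem wronskian_sum_C_mul_left (s : Finset ι) (c : ι → R) (q : ι → R[X]) (b : R[X]) :
    wronskian (∑ i ∈ s, C (c i) * q i) b = ∑ i ∈ s, C (c i) * wronskian (q i) b := by
  simp only [← smul_eq_C_mul, ← wronskianBilin_apply, map_sum, map_smul, LinearMap.sum_apply,
    LinearMap.smul_apply]

end Polynomial

namespace Lagrange

section

variable {F ι : Type*} [Field F] [DecidableEq ι] {s : Finset ι} {v : ι → F}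

theorem basis_eq_C_mul_nodal_erase {i : ι} (hi : i ∈ s) :
    Lagrange.basis s v i = C (eval (v i) (nodal (s.erase i) v))⁻¹ * nodal (s.erase i) v := by
  rw [basis_eq_prod_sub_inv_mul_nodal_div hi, ← nodal_erase_eq_nodal_div hi,
    nodalWeight_eq_eval_nodal_erase_inv]

theorem wronskian_nodal_eq_sum (hvs : Set.InjOn v s) {p : F[X]} (hp : p.degree < #s) :
    wronskian p (nodal s v) =
      ∑ i ∈ s, C (eval (v i) p / eval (v i) (nodal (s.erase i) v)) * nodal (s.erase i) v ^ 2 := by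
  have hp_sum : p = ∑ i ∈ s, C (eval (v i) p / eval (v i) (nodal (s.erase i) v)) *
      nodal (s.erase i) v := by
    conv_lhs => rw [eq_interpolate hvs hp, interpolate_apply]
    refine sum_congr rfl fun i hi => ?_
    rw [basis_eq_C_mul_nodal_erase hi, ← mul_assoc, ← C_mul, div_eq_mul_inv]
  conv_lhs => rw [hp_sum]
  rw [wronskian_sum_C_mul_left]
  refine sum_congr rfl fun i hi => ?_
  rw [nodal_eq_mul_nodal_erase hi, wronskian_X_sub_C_mul_right]

theorem exists_eval_nodal_erase_ne_zero (hvs : Set.InjOn v s) (hs : s.Nonempty) (x : F) :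
    ∃ i ∈ s, eval x (nodal (s.erase i) v) ≠ 0 := by
  by_cases hx : ∃ i ∈ s, x = v i
  · obtain ⟨i, hi, rfl⟩ := hx
    refine ⟨i, hi, eval_nodal_not_at_node fun j hj hij => ?_⟩
    obtain ⟨hji, hj⟩ := mem_erase.1 hj
    exact hji (hvs hj hi hij.symm)
  · push Not at hx
    obtain ⟨i, hi⟩ := hs
    exact ⟨i, hi, eval_nodal_not_at_node fun j hj => hx j (mem_of_mem_erase hj)⟩

end

section

variable {𝕜 ι : Type*} [Field 𝕜] [LinearOrder 𝕜] [IsStrictOrderedRing 𝕜] [DecidableEq ι]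
  {s : Finset ι} {v : ι → 𝕜}

theorem eval_wronskian_nodal_pos (hvs : Set.InjOn v s) (hs : s.Nonempty) {p : 𝕜[X]}
    (hp : p.degree < #s)
    (hres : ∀ i ∈ s, 0 < eval (v i) p * eval (v i) (nodal (s.erase i) v)) (x : 𝕜) :
    0 < eval x (wronskian p (nodal s v)) := by
  have hcoef : ∀ i ∈ s, 0 < eval (v i) p / eval (v i) (nodal (s.erase i) v) :=
    fun i hi => div_pos_iff.2 (mul_pos_iff.1 (hres i hi))
  obtain ⟨i, hi, hxi⟩ := exists_eval_nodal_erase_ne_zero hvs hs x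
  rw [wronskian_nodal_eq_sum hvs hp, eval_finsetSum]
  simp only [eval_mul, eval_C, eval_pow]
  exact sum_pos' (fun j hj => mul_nonneg (hcoef j hj).le (sq_nonneg _))
    ⟨i, hi, mul_pos (hcoef i hi) (sq_pos_of_ne_zero hxi)⟩

end

end Lagrange

section Interlacing

variable {R : Type*} [CommRing R] [LinearOrder R] [IsStrictOrderedRing R] {n : ℕ}
  {lam : Fin (n + 1) → R} {mu : Fin n → R}

theorem mul_sub_sub_succAbove_pos (hlam : StrictAnti lam)
    (hint : ∀ k : Fin n, lam k.succ < mu k ∧ mu k < lam k.castSucc) (k : Fin (n + 1)) (j : Fin n) :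
    0 < (lam k - mu j) * (lam k - lam (k.succAbove j)) := by
  rcases lt_or_ge j.castSucc k with hjk | hkj
  · rw [Fin.succAbove_of_castSucc_lt _ _ hjk]
    have hmu : lam k < mu j :=
      (hlam.antitone (Fin.castSucc_lt_iff_succ_le.1 hjk)).trans_lt (hint j).1
    exact mul_pos_of_neg_of_neg (sub_neg.2 hmu) (sub_neg.2 (hlam hjk))
  · rw [Fin.succAbove_of_le_castSucc _ _ hkj]
    have hmu : mu j < lam k := (hint j).2.trans_le (hlam.antitone hkj)
    exact mul_pos (sub_pos.2 hmu) (sub_pos.2 (hlam (hkj.trans_lt j.castSucc_lt_succ)))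

theorem eval_nodal_mul_eval_nodal_erase_pos (hlam : StrictAnti lam)
    (hint : ∀ k : Fin n, lam k.succ < mu k ∧ mu k < lam k.castSucc) (k : Fin (n + 1)) :
    0 < eval (lam k) (nodal univ mu) * eval (lam k) (nodal (univ.erase k) lam) := by
  rw [eval_nodal, eval_nodal, ← compl_singleton, ← Fin.image_succAbove_univ,
    prod_image Fin.succAbove_right_injective.injOn, ← prod_mul_distrib]
  exact prod_pos fun j _ => mul_sub_sub_succAbove_pos hlam hint k j

end Interlacing

theorem interlacing_wronskian_pos_general
    (n : ℕ) (lam : Fin (n + 1) → ℝ) (mu : Fin n → ℝ)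
    (hlam : StrictAnti lam)
    (hint : ∀ k : Fin n, lam k.succ < mu k ∧ mu k < lam k.castSucc)
    (f g : Polynomial ℝ)
    (hf : f = ∏ k, (Polynomial.X - Polynomial.C (lam k)))
    (hg : g = ∏ k, (Polynomial.X - Polynomial.C (mu k))) :
    ∀ x : ℝ,
      0 < (Polynomial.derivative f).eval x * g.eval x
            - (Polynomial.derivative g).eval x * f.eval x := by
  intro x
  rw [← nodal_eq] at hf hg
  subst hf hg
  have hdeg : (nodal univ mu).degree < #(univ : Finset (Fin (n + 1))) := by
    rw [degree_nodal, card_univ, card_univ, Fintype.card_fin, Fintype.card_fin]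
    exact_mod_cast n.lt_succ_self
  have hW := eval_wronskian_nodal_pos hlam.injective.injOn univ_nonempty hdeg
    (fun k _ => eval_nodal_mul_eval_nodal_erase_pos hlam hint k) x
  rw [wronskian, eval_sub, eval_mul, eval_mul] at hW
  linarith

/-- If `f` and `g` are monic real polynomials of degrees `n+1` and `n` whose roots are all
real, simple, and strictly interlacing (`λ_{k+1} < μ_k < λ_k`), then the Wronskian
`f'·g − g'·f` is strictly positive on all of `ℝ`. -/
theorem interlacing_wronskian_pos
    (n : ℕ) (lam : Fin (n + 1) → ℝ) (mu : Fin n → ℝ)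
    (hlam : StrictAnti lam) (hmu : StrictAnti mu)
    (hint : ∀ k : Fin n, lam k.succ < mu k ∧ mu k < lam k.castSucc)
    (f g : Polynomial ℝ)
    (hf : f = ∏ k, (Polynomial.X - Polynomial.C (lam k)))
    (hg : g = ∏ k, (Polynomial.X - Polynomial.C (mu k))) :
    ∀ x : ℝ,
      0 < (Polynomial.derivative f).eval x * g.eval x
            - (Polynomial.derivative g).eval x * f.eval x :=
  interlacing_wronskian_pos_general n lam mu hlam hint f g hf hg
end

section
/- (Second kind characteristic polynomials via the adjugate.) Let m ≥ 1, let λ : Fin m → ℝ, let D be the diagonal matrix with diagonal entries λ_k, let U be an invertible m×m real matrix, and set M := U · D · U⁻¹. Then for all vectors v, w ∈ ℝ^m and every x ∈ ℝ: vᵀ · adjugate(x·I_m − M) · w = ∑_{k=1}^{m} (vᵀU)_k · (U⁻¹w)_k · ∏_{l ≠ k} (x − λ_l). -/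
/-!
Writing `x • 1 - M = U * diagonal (x - λ) * U⁻¹`, the adjugate commutes with conjugation by an
invertible matrix, and the adjugate of a diagonal matrix is the diagonal matrix of the products
of the complementary entries; the bilinear form then splits along the columns of `U`.
-/

open Matrix

namespace Matrix

variable {n α : Type*} [Fintype n] [DecidableEq n] [CommRing α]

theorem adjugate_eq_det_smul_nonsing_inv {A : Matrix n n α} (hA : IsUnit A.det) :
    A.adjugate = A.det • A⁻¹ := by
  rw [inv_def, smul_smul, Ring.mul_inverse_cancel _ hA, one_smul]

theorem adjugate_conj {U : Matrix n n α} (hU : IsUnit U.det) (A : Matrix n n α) :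
    (U * A * U⁻¹).adjugate = U * A.adjugate * U⁻¹ := by
  have hdet : U.det * U⁻¹.det = 1 := by rw [← det_mul, mul_nonsing_inv U hU, det_one]
  rw [adjugate_mul_distrib, adjugate_mul_distrib, adjugate_eq_det_smul_nonsing_inv hU,
    adjugate_eq_det_smul_nonsing_inv (isUnit_nonsing_inv_det U hU),
    nonsing_inv_nonsing_inv U hU]
  simp only [Matrix.smul_mul, Matrix.mul_smul, smul_smul, Matrix.mul_assoc, hdet, one_smul]

theorem smul_one_sub_conj {U : Matrix n n α} (hU : IsUnit U.det) (x : α) (A : Matrix n n α) :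
    x • 1 - U * A * U⁻¹ = U * (x • 1 - A) * U⁻¹ := by
  rw [Matrix.mul_sub, Matrix.sub_mul, Matrix.mul_smul, Matrix.mul_one, Matrix.smul_mul,
    mul_nonsing_inv U hU]

theorem dotProduct_mul_diagonal_mul_mulVec {l o : Type*} [Fintype l] [Fintype o]
    (v : l → α) (A : Matrix l n α) (d : n → α) (B : Matrix n o α) (w : o → α) :
    v ⬝ᵥ (A * diagonal d * B) *ᵥ w = ∑ k, (v ᵥ* A) k * (B *ᵥ w) k * d k := by
  rw [← mulVec_mulVec, ← mulVec_mulVec, dotProduct_mulVec]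
  simp only [mulVec_diagonal, dotProduct]
  exact Finset.sum_congr rfl fun k _ => by ring

end Matrix

theorem adjugate_spectral_expansion_general
    (m : ℕ) (lam : Fin m → ℝ)
    (U : Matrix (Fin m) (Fin m) ℝ) (hU : IsUnit U.det)
    (M : Matrix (Fin m) (Fin m) ℝ)
    (hM : M = U * Matrix.diagonal lam * U⁻¹) :
    ∀ (v w : Fin m → ℝ) (x : ℝ),
      v ⬝ᵥ (x • (1 : Matrix (Fin m) (Fin m) ℝ) - M).adjugate.mulVec w
        = ∑ k, Matrix.vecMul v U k * Matrix.mulVec U⁻¹ w k *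
            ∏ l ∈ Finset.univ.erase k, (x - lam l) := by
  intro v w x
  have hadj : (x • (1 : Matrix (Fin m) (Fin m) ℝ) - M).adjugate
      = U * diagonal (fun k => ∏ l ∈ Finset.univ.erase k, (x - lam l)) * U⁻¹ := by
    rw [hM, smul_one_sub_conj hU, adjugate_conj hU, smul_one_eq_diagonal, diagonal_sub,
      adjugate_diagonal]
  rw [hadj, dotProduct_mul_diagonal_mul_mulVec]

/-- Second kind characteristic polynomials via the adjugate: if `M = U D U⁻¹` with `D`
diagonal with entries `λ_k` and `U` invertible, then for all vectors `v, w` and all `x`,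
`vᵀ · adj(x·I − M) · w = ∑_k (vᵀU)_k (U⁻¹w)_k ∏_{l ≠ k} (x − λ_l)`. -/
theorem adjugate_spectral_expansion
    (m : ℕ) (hm : 1 ≤ m) (lam : Fin m → ℝ)
    (U : Matrix (Fin m) (Fin m) ℝ) (hU : IsUnit U.det)
    (M : Matrix (Fin m) (Fin m) ℝ)
    (hM : M = U * Matrix.diagonal lam * U⁻¹) :
    ∀ (v w : Fin m → ℝ) (x : ℝ),
      v ⬝ᵥ (x • (1 : Matrix (Fin m) (Fin m) ℝ) - M).adjugate.mulVec w
        = ∑ k, Matrix.vecMul v U k * Matrix.mulVec U⁻¹ w k *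
            ∏ l ∈ Finset.univ.erase k, (x - lam l) :=
  adjugate_spectral_expansion_general m lam U hU M hM
end

section
/- (Exactness of truncation for banded matrix powers — degrees of precision.) Let T be a (p,q)-banded matrix. Fix a ∈ {1,…,p}, b ∈ {1,…,q} and N ∈ ℕ with N ≥ max(p,q), and set d := ⌈(N+2−a)/p⌉ + ⌈(N+2−b)/q⌉ − 1. Then for every natural number n ≤ d and every M ≥ N, the (b−1, a−1) entry of (T^{[M]})^n equals the (b−1, a−1) entry of (T^{[N]})^n (rows and columns indexed from 0). -/
/-- Banded power vanishing: if `T i j = 0` whenever `j + p < i`, then the `(k,j)` entry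
of the `n`-th power of a truncation vanishes when `j + n*p < k`. -/
lemma bandpow_aux (p : ℕ) (T : ℕ → ℕ → ℝ)
    (hband : ∀ i j : ℕ, j + p < i → T i j = 0) :
    ∀ n M : ℕ, ∀ k j : Fin (M + 1), (j : ℕ) + n * p < (k : ℕ) →
      ((Matrix.of fun i j : Fin (M + 1) => T i j) ^ n) k j = 0 := by
  intro n
  induction n with
  | zero =>
    intro M k j h
    have hkj : k ≠ j := by
      intro e; subst e; omega
    simp [Matrix.one_apply, hkj]
  | succ n ih =>
    intro M k j h
    rw [add_one_mul] at h
    rw [pow_succ', Matrix.mul_apply]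
    apply Finset.sum_eq_zero
    intro l _
    by_cases hl : (l : ℕ) + p < (k : ℕ)
    · have h0 : T k l = 0 := hband _ _ hl
      simp [h0]
    · have hlj : (j : ℕ) + n * p < (l : ℕ) := by omega
      rw [ih M l j hlj, mul_zero]

lemma key_aux (p q : ℕ) (hp : 1 ≤ p) (hq : 1 ≤ q) (T : ℕ → ℕ → ℝ)
    (hband : ∀ i j, (j + p < i ∨ i + q < j) → T i j = 0) (N : ℕ) :
    ∀ n M : ℕ, ∀ _hNM : N ≤ M, ∀ i j : ℕ, ∀ _hi : i ≤ N, ∀ _hj : j ≤ N,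
      (n : ℤ) + 1 ≤ ⌈(((N : ℤ) + 1 - (i : ℤ)) : ℚ) / (q : ℚ)⌉
        + ⌈(((N : ℤ) + 1 - (j : ℤ)) : ℚ) / (p : ℚ)⌉ →
      ((Matrix.of fun i j : Fin (M + 1) => T i j) ^ n)
          ⟨i, by omega⟩ ⟨j, by omega⟩
        = ((Matrix.of fun i j : Fin (N + 1) => T i j) ^ n)
          ⟨i, by omega⟩ ⟨j, by omega⟩ := by
  have hband1 : ∀ i j : ℕ, j + p < i → T i j = 0 := fun i j h => hband i j (Or.inl h)
  have hband2 : ∀ i j : ℕ, i + q < j → T i j = 0 := fun i j h => hband i j (Or.inr h)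
  have hp' : (0 : ℚ) < (p : ℚ) := by exact_mod_cast hp
  have hq' : (0 : ℚ) < (q : ℚ) := by exact_mod_cast hq
  intro n
  induction n with
  | zero =>
    intro M hNM i j hi hj _
    simp [Matrix.one_apply, Fin.ext_iff]
  | succ n ih =>
    intro M hNM i j hi hj hceil
    push_cast at hceil
    rw [pow_succ', pow_succ', Matrix.mul_apply, Matrix.mul_apply]
    -- encode the summands as functions on ℕ
    set AM := (Matrix.of fun i j : Fin (M + 1) => T i j) with hAM
    set AN := (Matrix.of fun i j : Fin (N + 1) => T i j) with hAN
    have hjM : j < M + 1 := by omega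
    have hjN : j < N + 1 := by omega
    set F : ℕ → ℝ := fun k =>
      if h : k < M + 1 then T i k * (AM ^ n) ⟨k, h⟩ ⟨j, hjM⟩ else 0 with hF
    set G : ℕ → ℝ := fun k =>
      if h : k < N + 1 then T i k * (AN ^ n) ⟨k, h⟩ ⟨j, hjN⟩ else 0 with hG
    have hL : ∑ k : Fin (M + 1), AM ⟨i, by omega⟩ k * (AM ^ n) k ⟨j, hjM⟩
        = ∑ k ∈ Finset.range (M + 1), F k := by
      rw [← Fin.sum_univ_eq_sum_range F (M + 1)]
      apply Finset.sum_congr rfl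
      intro k _
      simp only [hF, k.isLt, dif_pos]
      rfl
    have hR : ∑ k : Fin (N + 1), AN ⟨i, by omega⟩ k * (AN ^ n) k ⟨j, hjN⟩
        = ∑ k ∈ Finset.range (N + 1), G k := by
      rw [← Fin.sum_univ_eq_sum_range G (N + 1)]
      apply Finset.sum_congr rfl
      intro k _
      simp only [hG, k.isLt, dif_pos]
      rfl
    rw [hL, hR]
    -- F vanishes for N < k ≤ M
    have hvanish : ∀ k ∈ Finset.range (M + 1), k ∉ Finset.range (N + 1) → F k = 0 := by
      intro k hk hk'
      simp only [Finset.mem_range] at hk hk'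
      have hkN : N < k := by omega
      simp only [hF, hk, dif_pos]
      by_cases hik : i + q < k
      · rw [hband2 i k hik, zero_mul]
      · -- k ≤ i + q, N < k : use the ceiling bound to get j + n*p < k
        have hiq : (i : ℤ) + q ≥ N + 1 := by omega
        have hcI : ⌈(((N : ℤ) + 1 - (i : ℤ)) : ℚ) / (q : ℚ)⌉ ≤ 1 := by
          apply Int.ceil_le.mpr
          rw [Int.cast_one, div_le_one hq']
          push_cast
          have hZ : (N : ℤ) + 1 - (i : ℤ) ≤ (q : ℤ) := by omega
          exact_mod_cast hZ
        have hcJ : (n : ℤ) + 1 ≤ ⌈(((N : ℤ) + 1 - (j : ℤ)) : ℚ) / (p : ℚ)⌉ := by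
          push_cast at hcI ⊢
          omega
        have hlt : (n : ℚ) < (((N : ℤ) + 1 - (j : ℤ)) : ℚ) / (p : ℚ) := by
          have := Int.lt_ceil.mp (by omega : (n : ℤ) < ⌈(((N : ℤ) + 1 - (j : ℤ)) : ℚ) / (p : ℚ)⌉)
          exact_mod_cast this
        have hnp : (n : ℚ) * p < (N : ℚ) + 1 - j := by
          have := (lt_div_iff₀ hp').mp hlt
          push_cast at this
          linarith
        have hnpZ : (j : ℤ) + (n : ℤ) * p < (N : ℤ) + 1 := by
          have : ((j : ℤ) + (n : ℤ) * p : ℚ) < (N : ℚ) + 1 := by push_cast; linarith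
          exact_mod_cast this
        have hjnp : j + n * p < k := by
          have : (j : ℤ) + (n : ℤ) * p < (k : ℤ) := by
            have : ((N : ℤ) + 1) ≤ (k : ℤ) := by exact_mod_cast hkN
            omega
          exact_mod_cast this
        rw [bandpow_aux p T hband1 n M ⟨k, hk⟩ ⟨j, hjM⟩ hjnp, mul_zero]
    rw [← Finset.sum_subset (Finset.range_subset_range.mpr (by omega : N + 1 ≤ M + 1)) hvanish]
    -- on range (N+1), F = G
    apply Finset.sum_congr rfl
    intro k hk
    simp only [Finset.mem_range] at hk
    have hkM : k < M + 1 := by omega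
    simp only [hF, hG, hkM, hk, dif_pos]
    by_cases hik : i + q < k
    · rw [hband2 i k hik, zero_mul, zero_mul]
    · congr 1
      apply ih M hNM k j (by omega) hj
      -- ceiling estimate: ⌈(N+1-k)/q⌉ ≥ ⌈(N+1-i)/q⌉ - 1
      have h1 : (((N : ℤ) + 1 - (i : ℤ)) : ℚ) / (q : ℚ) - 1
          ≤ (((N : ℤ) + 1 - (k : ℤ)) : ℚ) / (q : ℚ) := by
        rw [div_sub_one (ne_of_gt hq'), div_le_div_iff_of_pos_right hq']
        push_cast
        have : (k : ℚ) ≤ (i : ℚ) + q := by exact_mod_cast (by omega : k ≤ i + q)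
        linarith
      have h2 : ⌈(((N : ℤ) + 1 - (i : ℤ)) : ℚ) / (q : ℚ)⌉ - 1
          ≤ ⌈(((N : ℤ) + 1 - (k : ℤ)) : ℚ) / (q : ℚ)⌉ := by
        calc ⌈(((N : ℤ) + 1 - (i : ℤ)) : ℚ) / (q : ℚ)⌉ - 1
            = ⌈(((N : ℤ) + 1 - (i : ℤ)) : ℚ) / (q : ℚ) - 1⌉ := (Int.ceil_sub_one _).symm
          _ ≤ _ := Int.ceil_le_ceil h1
      push_cast at h2 ⊢
      omega

/-- Exactness of truncation for banded matrix powers (degrees of precision): for a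
`(p,q)`-banded matrix `T`, `a ∈ {1,…,p}`, `b ∈ {1,…,q}`, `N ≥ max(p,q)` and
`d = ⌈(N+2−a)/p⌉ + ⌈(N+2−b)/q⌉ − 1`, the `(b−1, a−1)` entry of `(T^{[M]})ⁿ` equals that of
`(T^{[N]})ⁿ` for every `n ≤ d` and every `M ≥ N`. -/
theorem truncation_exactness_degrees_of_precision
    (p q : ℕ) (hp : 1 ≤ p) (hq : 1 ≤ q)
    (T : ℕ → ℕ → ℝ)
    (hband : ∀ i j, (j + p < i ∨ i + q < j) → T i j = 0)
    (a b N : ℕ) (ha1 : 1 ≤ a) (hap : a ≤ p) (hb1 : 1 ≤ b) (hbq : b ≤ q)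
    (hN : max p q ≤ N)
    (d : ℕ)
    (hd : (d : ℤ) = ⌈(((N : ℤ) + 2 - (a : ℤ)) : ℚ) / (p : ℚ)⌉
        + ⌈(((N : ℤ) + 2 - (b : ℤ)) : ℚ) / (q : ℚ)⌉ - 1) :
    ∀ n : ℕ, n ≤ d → ∀ M : ℕ, ∀ _hNM : N ≤ M,
      ((Matrix.of fun i j : Fin (M + 1) => T i j) ^ n)
          ⟨b - 1, by omega⟩ ⟨a - 1, by omega⟩
        = ((Matrix.of fun i j : Fin (N + 1) => T i j) ^ n)
          ⟨b - 1, by omega⟩ ⟨a - 1, by omega⟩ := by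
  intro n hn M hNM
  apply key_aux p q hp hq T hband N n M hNM (b - 1) (a - 1) (by omega) (by omega)
  have e1 : (((N : ℤ) + 1 - ((b - 1 : ℕ) : ℤ)) : ℚ) = (((N : ℤ) + 2 - (b : ℤ)) : ℚ) := by
    have : ((b - 1 : ℕ) : ℤ) = (b : ℤ) - 1 := by omega
    rw [this]; push_cast; ring
  have e2 : (((N : ℤ) + 1 - ((a - 1 : ℕ) : ℤ)) : ℚ) = (((N : ℤ) + 2 - (a : ℤ)) : ℚ) := by
    have : ((a - 1 : ℕ) : ℤ) = (a : ℤ) - 1 := by omega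
    rw [this]; push_cast; ring
  rw [e1, e2]
  have : (n : ℤ) ≤ (d : ℤ) := by exact_mod_cast hn
  omega
end

section
/- (Hermite–Padé simultaneous approximation.) Let q ≥ 1, let K > 0, let μ_1, …, μ_q be finite Borel measures on ℝ each supported in the interval [−K, K], let B_1, …, B_q ∈ ℝ[x] be polynomials, and let m ∈ ℕ. Assume the orthogonality conditions ∑_{b=1}^{q} ∫ x^k · B_b(x) dμ_b(x) = 0 for every k ∈ {0,…,m−1}. Then there exist constants C ≥ 0 and R₀ > K such that for every real z with |z| ≥ R₀: |∑_{b=1}^{q} B_b(z) · ∫ (z − x)⁻¹ dμ_b(x) − ∑_{b=1}^{q} ∫ (B_b(z) − B_b(x))/(z − x) dμ_b(x)| ≤ C · |z|^{−(m+1)}. -/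
/-!
Since `B(z) (z - x)⁻¹ - (B(z) - B(x)) / (z - x) = B(x) / (z - x)`, the quantity to estimate is
`∑_b ∫ B_b(x) / (z - x) dμ_b`. Expanding
`(z - x)⁻¹ = ∑_{k < m} x^k / z^(k+1) + x^m / (z^m (z - x))`, the first `m` moments cancel by
orthogonality, leaving `z^(-m) ∑_b ∫ x^m B_b(x) / (z - x) dμ_b`; this remainder is
`O(|z|^(-m-1))` because `|z - x| ≥ |z| / 2` on `[-K, K]` once `|z| ≥ 2K`.
-/

open MeasureTheory Finset Set

theorem ContinuousOn.integrable_of_ae_mem {α E : Type*} [TopologicalSpace α] [T2Space α]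
    [MeasurableSpace α] [OpensMeasurableSpace α] [NormedAddCommGroup E]
    {μ : Measure α} [IsFiniteMeasure μ] {s : Set α} {f : α → E}
    (hf : ContinuousOn f s) (hs : IsCompact s) (hμ : ∀ᵐ x ∂μ, x ∈ s) : Integrable f μ := by
  have h := hf.integrableOn_compact (μ := μ) hs
  rwa [IntegrableOn, Measure.restrict_eq_self_of_ae_mem hμ] at h

theorem inv_sub_eq_sum_add {𝕜 : Type*} [Field 𝕜] {z x : 𝕜} (hz : z ≠ 0) (hzx : z - x ≠ 0)
    (m : ℕ) :
    (z - x)⁻¹ = ∑ k ∈ range m, x ^ k / z ^ (k + 1) + x ^ m / (z ^ m * (z - x)) := by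
  induction m with
  | zero => simp
  | succ n ih =>
    rw [sum_range_succ, ih]
    field_simp
    ring

theorem mul_integral_inv_sub_sub_integral_div_sub {μ : Measure ℝ} {z c : ℝ} {f : ℝ → ℝ}
    (hinv : Integrable (fun x => (z - x)⁻¹) μ) (hf : Integrable (fun x => f x / (z - x)) μ) :
    c * ∫ x, (z - x)⁻¹ ∂μ - ∫ x, (c - f x) / (z - x) ∂μ = ∫ x, f x / (z - x) ∂μ := by
  have hsplit : (fun x => (c - f x) / (z - x)) = fun x => c * (z - x)⁻¹ - f x / (z - x) := by
    funext x
    ring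
  rw [hsplit, integral_sub (hinv.const_mul c) hf, integral_const_mul]
  ring

theorem sub_ne_zero_of_mem_of_notMem {G : Type*} [AddGroup G] {s : Set G} {x z : G}
    (hzs : z ∉ s) (hx : x ∈ s) : z - x ≠ 0 :=
  sub_ne_zero.2 fun h => hzs (h ▸ hx)

theorem integral_div_sub_eq_sum_add {μ : Measure ℝ} [IsFiniteMeasure μ] {s : Set ℝ} {z : ℝ}
    (hs : IsCompact s) (hμ : ∀ᵐ x ∂μ, x ∈ s) {f : ℝ → ℝ}
    (hf : ContinuousOn f s) (hz : z ≠ 0) (hzs : z ∉ s) (m : ℕ) :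
    ∫ x, f x / (z - x) ∂μ = ∑ k ∈ range m, (∫ x, x ^ k * f x ∂μ) / z ^ (k + 1)
      + (∫ x, x ^ m * f x / (z - x) ∂μ) / z ^ m := by
  have hmoment : ∀ k, Integrable (fun x => x ^ k * f x) μ := fun k =>
    ((continuous_pow k).continuousOn.mul hf).integrable_of_ae_mem hs hμ
  have hrem : Integrable (fun x => x ^ m * f x / (z - x)) μ :=
    (((continuous_pow m).continuousOn.mul hf).div (continuousOn_const.sub continuousOn_id)
      fun x hx => sub_ne_zero_of_mem_of_notMem hzs hx).integrable_of_ae_mem hs hμ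
  calc ∫ x, f x / (z - x) ∂μ
      = ∫ x, (∑ k ∈ range m, x ^ k * f x / z ^ (k + 1) + x ^ m * f x / (z - x) / z ^ m) ∂μ := by
        refine integral_congr_ae (hμ.mono fun x hx => ?_)
        show f x / (z - x) = _
        rw [div_eq_mul_inv, inv_sub_eq_sum_add hz (sub_ne_zero_of_mem_of_notMem hzs hx) m,
          mul_add, mul_sum, ← div_div]
        congr 1
        · exact sum_congr rfl fun k _ => by ring
        · ring
    _ = _ := by
        rw [integral_add (integrable_finsetSum _ fun k _ => (hmoment k).div_const _)
          (hrem.div_const _), integral_finsetSum _ fun k _ => (hmoment k).div_const _,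
          integral_div]
        simp_rw [integral_div]

theorem abs_integral_div_sub_le {μ : Measure ℝ} [IsFiniteMeasure μ] {K M z : ℝ} {g : ℝ → ℝ}
    (hμ : ∀ᵐ x ∂μ, x ∈ Icc (-K) K) (hg : ∀ x ∈ Icc (-K) K, |g x| ≤ M) (hz : 2 * K ≤ |z|)
    (hz0 : z ≠ 0) :
    |∫ x, g x / (z - x) ∂μ| ≤ 2 * M / |z| * μ.real univ := by
  rw [← Real.norm_eq_abs]
  refine norm_integral_le_of_norm_le_const (hμ.mono fun x hx => ?_)
  have hzx : |z| / 2 ≤ |z - x| := by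
    linarith [abs_le.2 hx, abs_sub_abs_le_abs_sub z x]
  have hz' : 0 < |z| / 2 := by positivity
  rw [Real.norm_eq_abs, abs_div]
  calc |g x| / |z - x| ≤ M / (|z| / 2) :=
        div_le_div₀ ((abs_nonneg _).trans (hg x hx)) (hg x hx) hz' hzx
    _ = 2 * M / |z| := by field_simp

theorem sum_mul_integral_inv_sub_sub_sum_integral_eq {ι : Type*} [Fintype ι]
    {μ : ι → Measure ℝ} [∀ b, IsFiniteMeasure (μ b)] {s : Set ℝ} (hs : IsCompact s)
    (hμ : ∀ b, ∀ᵐ x ∂μ b, x ∈ s) {f : ι → ℝ → ℝ} (hf : ∀ b, ContinuousOn (f b) s) {m : ℕ}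
    (horth : ∀ k, k < m → ∑ b, ∫ x, x ^ k * f b x ∂μ b = 0) {z : ℝ} (hz : z ≠ 0)
    (hzs : z ∉ s) :
    (∑ b, f b z * ∫ x, (z - x)⁻¹ ∂μ b) - ∑ b, ∫ x, (f b z - f b x) / (z - x) ∂μ b
      = (∑ b, ∫ x, x ^ m * f b x / (z - x) ∂μ b) / z ^ m := by
  have hsub : ∀ x ∈ s, z - x ≠ 0 := fun x hx => sub_ne_zero_of_mem_of_notMem hzs hx
  have hinv : ContinuousOn (fun x => (z - x)⁻¹) s :=
    (continuousOn_const.sub continuousOn_id).inv₀ hsub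
  rw [← sum_sub_distrib]
  calc _ = ∑ b, (∑ k ∈ range m, (∫ x, x ^ k * f b x ∂μ b) / z ^ (k + 1)
          + (∫ x, x ^ m * f b x / (z - x) ∂μ b) / z ^ m) :=
        sum_congr rfl fun b _ => by
          rw [mul_integral_inv_sub_sub_integral_div_sub (hinv.integrable_of_ae_mem hs (hμ b))
              (((hf b).div (continuousOn_const.sub continuousOn_id) hsub).integrable_of_ae_mem
                hs (hμ b)),
            integral_div_sub_eq_sum_add hs (hμ b) (hf b) hz hzs]
    _ = ∑ k ∈ range m, (∑ b, ∫ x, x ^ k * f b x ∂μ b) / z ^ (k + 1)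
          + (∑ b, ∫ x, x ^ m * f b x / (z - x) ∂μ b) / z ^ m := by
        rw [sum_add_distrib, sum_comm, sum_div]
        simp_rw [sum_div]
    _ = _ := by
        rw [sum_eq_zero fun k hk => by rw [horth k (mem_range.1 hk), zero_div], zero_add]

theorem hermite_pade_simultaneous_approximation_general
    (q : ℕ) (K : ℝ)
    (μ : Fin q → Measure ℝ)
    (hfin : ∀ b, IsFiniteMeasure (μ b))
    (hsupp : ∀ b, μ b ((Set.Icc (-K) K)ᶜ) = 0)
    (B : Fin q → Polynomial ℝ) (m : ℕ)
    (horth : ∀ k, k < m → ∑ b, ∫ x, x ^ k * (B b).eval x ∂(μ b) = 0) :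
    ∃ C : ℝ, 0 ≤ C ∧ ∃ R₀ : ℝ, K < R₀ ∧ ∀ z : ℝ, R₀ ≤ |z| →
      |(∑ b, (B b).eval z * ∫ x, (z - x)⁻¹ ∂(μ b))
          - ∑ b, ∫ x, ((B b).eval z - (B b).eval x) / (z - x) ∂(μ b)|
        ≤ C * |z| ^ (-((m : ℤ) + 1)) := by
  have hμ : ∀ b, ∀ᵐ x ∂μ b, x ∈ Icc (-K) K := fun b => mem_ae_iff.2 (hsupp b)
  have hbound : ∀ b, ∃ M, 0 ≤ M ∧ ∀ x ∈ Icc (-K) K, |x ^ m * (B b).eval x| ≤ M := fun b => by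
    obtain ⟨M, hM⟩ := isCompact_Icc.exists_bound_of_continuousOn
      ((continuous_pow m).mul (B b).continuous).continuousOn
    exact ⟨max M 0, le_max_right _ _, fun x hx => (hM x hx).trans (le_max_left _ _)⟩
  choose M hM0 hM using hbound
  refine ⟨∑ b, 2 * M b * (μ b).real univ,
    sum_nonneg fun b _ => mul_nonneg (mul_nonneg zero_le_two (hM0 b)) measureReal_nonneg,
    2 * |K| + 1, by linarith [le_abs_self K, abs_nonneg K], fun z hz => ?_⟩
  have hz0 : z ≠ 0 := by
    rintro rfl
    linarith [abs_nonneg K, abs_zero (α := ℝ)]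
  have hzK : 2 * K ≤ |z| := by linarith [le_abs_self K]
  have hzS : z ∉ Icc (-K) K := fun h => by linarith [abs_le.2 h, abs_nonneg K]
  rw [sum_mul_integral_inv_sub_sub_sum_integral_eq isCompact_Icc hμ
    (fun b => (B b).continuous.continuousOn) horth hz0 hzS]
  calc _ ≤ (∑ b, 2 * M b / |z| * (μ b).real univ) / |z| ^ m := by
        rw [abs_div, abs_pow]
        gcongr
        exact (abs_sum_le_sum_abs _ _).trans
          (sum_le_sum fun b _ => abs_integral_div_sub_le (hμ b) (hM b) hzK hz0)
    _ = _ := by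
        rw [zpow_neg, ← Nat.cast_succ, zpow_natCast, pow_succ, sum_mul, sum_div]
        refine sum_congr rfl fun b _ => ?_
        field_simp

/-- Hermite–Padé simultaneous approximation: if the measures `μ_1,…,μ_q` are finite and
supported in `[−K,K]` and the polynomials `B_1,…,B_q` satisfy the orthogonality conditions
`∑_b ∫ x^k B_b(x) dμ_b = 0` for `k < m`, then
`∑_b B_b(z) ∫ (z−x)⁻¹ dμ_b − ∑_b ∫ (B_b(z)−B_b(x))/(z−x) dμ_b = O(|z|^{−(m+1)})`
as `|z| → ∞`. -/
theorem hermite_pade_simultaneous_approximation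
    (q : ℕ) (hq : 1 ≤ q) (K : ℝ) (hK : 0 < K)
    (μ : Fin q → Measure ℝ)
    (hfin : ∀ b, IsFiniteMeasure (μ b))
    (hsupp : ∀ b, μ b ((Set.Icc (-K) K)ᶜ) = 0)
    (B : Fin q → Polynomial ℝ) (m : ℕ)
    (horth : ∀ k, k < m → ∑ b, ∫ x, x ^ k * (B b).eval x ∂(μ b) = 0) :
    ∃ C : ℝ, 0 ≤ C ∧ ∃ R₀ : ℝ, K < R₀ ∧ ∀ z : ℝ, R₀ ≤ |z| →
      |(∑ b, (B b).eval z * ∫ x, (z - x)⁻¹ ∂(μ b))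
          - ∑ b, ∫ x, ((B b).eval z - (B b).eval x) / (z - x) ∂(μ b)|
        ≤ C * |z| ^ (-((m : ℤ) + 1)) :=
  hermite_pade_simultaneous_approximation_general q K μ hfin hsupp B m horth
end
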